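/- arXiv:2509.25535 — 4 statements merged into one kernel-verified Lean document; each statement's English description precedes it below -/
import Mathlib

section
/- Under the same setup, the doubly robust pseudo-outcome is robust to nuisance misspecification: if φ is constructed with a possibly wrong outcome model μ̃_t but the correct propensity p, i.e. φ = ((t − p(s))/(p(s)(1−p(s))))·(o − μ̃_t(s)) + μ̃₁(s) − μ̃₀(s), then E[φ | s] = Δ(s) still holds, for any bounded measurable μ̃₀, μ̃₁. -/
open MeasureTheory ProbabilityTheory


lemma aux_condIndepFun_congr {Ω : Type*} {m' : MeasurableSpace Ω} {mΩ : MeasurableSpace Ω}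
    [StandardBorelSpace Ω] {μ : Measure Ω} [IsProbabilityMeasure μ] (hm' : m' ≤ mΩ) {β γ : Type*} [MeasurableSpace β] [MeasurableSpace γ]
    {f : Ω → β} {g g' : Ω → γ} (h : CondIndepFun m' hm' f g μ) (hgg' : g =ᵐ[μ] g') :
    CondIndepFun m' hm' f g' μ := by
  have hN : μ (toMeasurable μ {ω | g ω ≠ g' ω}) = 0 := by
    rw [measure_toMeasurable]; exact hgg'
  set N := toMeasurable μ {ω | g ω ≠ g' ω} with hNdef
  have hNmeas : MeasurableSet N := measurableSet_toMeasurable _ _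
  -- condExpKernel of N is 0 a.e.
  have h1 : (fun ω => (condExpKernel μ m' ω N).toReal) =ᵐ[μ] μ⟦N | m'⟧ :=
    condExpKernel_ae_eq_condExp hm' hNmeas
  have h2 : (μ⟦N | m'⟧) =ᵐ[μ] 0 := by
    have : N.indicator (fun _ => (1:ℝ)) =ᵐ[μ] 0 := by
      filter_upwards [measure_eq_zero_iff_ae_notMem.mp hN] with ω hω
      simp [Set.indicator_of_notMem hω]
    exact (condExp_congr_ae this).trans (by simp [condExp_zero])
  have h3 : ∀ᵐ ω ∂μ, condExpKernel μ m' ω N = 0 := by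
    filter_upwards [h1, h2] with ω hω1 hω2
    have hlt : condExpKernel μ m' ω N ≠ ⊤ := (measure_ne_top _ _)
    have : (condExpKernel μ m' ω N).toReal = 0 := by rw [hω1, hω2]; rfl
    exact (ENNReal.toReal_eq_zero_iff _).mp this |>.resolve_right (by simpa using hlt)
  -- upgrade to trim-a.e.
  have h4 : ∀ᵐ ω ∂(μ.trim hm'), condExpKernel μ m' ω N = 0 := by
    rw [ae_iff] at h3 ⊢
    have hms : MeasurableSet[m'] {ω | ¬ condExpKernel μ m' ω N = 0} := by
      have := measurable_condExpKernel (μ := μ) (m := m') hNmeas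
      exact (this (measurableSet_singleton 0)).compl
    rw [trim_measurableSet_eq hm' hms]
    exact h3
  refine Kernel.IndepFun.congr' h (Filter.Eventually.of_forall fun a => Filter.EventuallyEq.rfl) ?_
  filter_upwards [h4] with a ha
  have : condExpKernel μ m' a {ω | g ω ≠ g' ω} = 0 :=
    measure_mono_null (subset_toMeasurable _ _) ha
  exact this

lemma aux_integrable_bdd' {Ω : Type*} {mΩ : MeasurableSpace Ω} {μ : Measure Ω}
    [IsFiniteMeasure μ] {f : Ω → ℝ} (hf : AEStronglyMeasurable f μ) {C : ℝ}
    (h : ∀ ω, |f ω| ≤ C) : Integrable f μ :=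
  Integrable.mono' (integrable_const C) hf (Filter.Eventually.of_forall fun ω => by
    simpa [Real.norm_eq_abs] using h ω)


lemma aux_condexp_sup {Ω : Type*} {mΩ : MeasurableSpace Ω} [StandardBorelSpace Ω]
    (μ : Measure Ω) [IsProbabilityMeasure μ]
    {β γ : Type*} [MeasurableSpace β] [MeasurableSpace γ]
    {s : Ω → β} (hs : Measurable s) {X : Ω → γ} (hX : Measurable X)
    {t : Ω → ℝ} (ht : Measurable t) (ht01 : ∀ ω, t ω = 0 ∨ t ω = 1)
    {p : β → ℝ} (hp : Measurable p) (hpb : ∀ x, |p x| ≤ 1)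
    (hprop : μ[t|MeasurableSpace.comap s inferInstance] =ᵐ[μ] fun ω => p (s ω))
    (hunconf : CondIndepFun (MeasurableSpace.comap s inferInstance) hs.comap_le t X μ) :
    μ[t|MeasurableSpace.comap s inferInstance ⊔ MeasurableSpace.comap X inferInstance] =ᵐ[μ]
      fun ω => p (s ω) := by
  set mσ : MeasurableSpace Ω := MeasurableSpace.comap s inferInstance with hmσdef
  set mX : MeasurableSpace Ω := MeasurableSpace.comap X inferInstance with hmXdef
  letI : MeasurableSpace Ω := mΩ
  have hm : mσ ≤ mΩ := hs.comap_le
  have hmX : mX ≤ mΩ := hX.comap_le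
  have hM : mσ ⊔ mX ≤ mΩ := sup_le hm hmX
  have hsm : Measurable[mσ] s := fun _ hB => ⟨_, hB, rfl⟩
  have htb : ∀ ω, |t ω| ≤ 1 := fun ω => by rcases ht01 ω with h | h <;> simp [h]
  have htint : Integrable t μ := aux_integrable_bdd' ht.aestronglyMeasurable htb
  have hpsb : ∀ ω, |p (s ω)| ≤ 1 := fun ω => hpb (s ω)
  have hpsmeas : Measurable[mσ] fun ω => p (s ω) := hp.comp hsm
  have hpsint : Integrable (fun ω => p (s ω)) μ :=
    aux_integrable_bdd' ((hp.comp hs).aestronglyMeasurable) hpsb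
  -- t as an indicator
  set A : Set Ω := t ⁻¹' {1} with hAdef
  have hA : MeasurableSet A := ht (measurableSet_singleton 1)
  have ht_ind : ∀ ω, t ω = A.indicator (fun _ => (1:ℝ)) ω := fun ω => by
    rcases ht01 ω with h | h <;>
      simp [Set.indicator_apply, hAdef, Set.mem_preimage, h]
  -- the generating π-system
  set S : Set (Set Ω) := {C | ∃ E F, MeasurableSet[mσ] E ∧ MeasurableSet[mX] F ∧ C = E ∩ F}
    with hSdef
  have hgen : mσ ⊔ mX = MeasurableSpace.generateFrom S := by
    refine le_antisymm (sup_le ?_ ?_) (MeasurableSpace.generateFrom_le ?_)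
    · exact fun E hE => MeasurableSpace.measurableSet_generateFrom
        ⟨E, Set.univ, hE, MeasurableSet.univ, by simp⟩
    · exact fun F hF => MeasurableSpace.measurableSet_generateFrom
        ⟨Set.univ, F, MeasurableSet.univ, hF, by simp⟩
    · rintro C ⟨E, F, hE, hF, rfl⟩
      exact MeasurableSet.inter ((le_sup_left : mσ ≤ mσ ⊔ mX) E hE)
        ((le_sup_right : mX ≤ mσ ⊔ mX) F hF)
  have hpi : IsPiSystem S := by
    rintro _ ⟨E₁, F₁, hE₁, hF₁, rfl⟩ _ ⟨E₂, F₂, hE₂, hF₂, rfl⟩ _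
    exact ⟨E₁ ∩ E₂, F₁ ∩ F₂, hE₁.inter hE₂, hF₁.inter hF₂, by
      rw [Set.inter_inter_inter_comm]⟩
  -- the key integral identity on the π-system, extended by Dynkin
  have key : ∀ C, MeasurableSet[mσ ⊔ mX] C →
      ∫ ω in C, p (s ω) ∂μ = ∫ ω in C, t ω ∂μ := by
    intro C hC
    refine MeasurableSpace.induction_on_inter (m := mσ ⊔ mX)
      (C := fun D _ => ∫ ω in D, p (s ω) ∂μ = ∫ ω in D, t ω ∂μ) hgen hpi (by simp) ?_ ?_ ?_ _ hC
    · -- basic case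
      rintro _ ⟨E, F, hE, hFmX, rfl⟩
      obtain ⟨B, hB, rfl⟩ := hFmX
      have hE0 : MeasurableSet E := hm _ hE
      have hF0 : MeasurableSet (X ⁻¹' B) := hX hB
      set χF : Ω → ℝ := (X ⁻¹' B).indicator (fun _ => 1) with hχFdef
      have hχFb : ∀ ω, |χF ω| ≤ 1 := fun ω => by
        by_cases h : ω ∈ X ⁻¹' B <;> simp [hχFdef, Set.indicator_apply, h]
      have hχFmeas : Measurable χF := (measurable_const.indicator hF0)
      have hχFint : Integrable χF μ := aux_integrable_bdd' hχFmeas.aestronglyMeasurable hχFb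
      -- LHS
      have l1 : ∫ ω in E ∩ X ⁻¹' B, p (s ω) ∂μ = ∫ ω in E, p (s ω) * χF ω ∂μ := by
        rw [← setIntegral_indicator hF0]
        refine setIntegral_congr_ae hE0 (Filter.Eventually.of_forall fun ω _ => ?_)
        by_cases h : ω ∈ X ⁻¹' B <;> simp [hχFdef, Set.indicator_apply, h]
      have hpsχint : Integrable (fun ω => p (s ω) * χF ω) μ :=
        hχFint.bdd_mul ((hp.comp hs).aestronglyMeasurable)
          (c := 1) (Filter.Eventually.of_forall fun ω => by simpa [Real.norm_eq_abs] using hpsb ω)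
      have l2 : ∫ ω in E, p (s ω) * χF ω ∂μ
          = ∫ ω in E, (μ[fun ω => p (s ω) * χF ω|mσ]) ω ∂μ :=
        (setIntegral_condExp hm hpsχint hE).symm
      have l3 : μ[fun ω => p (s ω) * χF ω|mσ] =ᵐ[μ] fun ω => p (s ω) * (μ[χF|mσ]) ω :=
        condExp_mul_of_stronglyMeasurable_left hpsmeas.stronglyMeasurable hpsχint hχFint
      -- RHS
      have r1 : ∫ ω in E ∩ X ⁻¹' B, t ω ∂μ
          = ∫ ω in E, (A ∩ X ⁻¹' B).indicator (fun _ => (1:ℝ)) ω ∂μ := by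
        rw [← setIntegral_indicator hF0]
        refine setIntegral_congr_ae hE0 (Filter.Eventually.of_forall fun ω _ => ?_)
        by_cases h : ω ∈ X ⁻¹' B
        · rw [Set.indicator_of_mem h]
          by_cases h2 : ω ∈ A <;>
            simp [Set.indicator_apply, h, h2, ht_ind ω]
        · simp [Set.indicator_apply, h]
      have hindint : Integrable ((A ∩ X ⁻¹' B).indicator (fun _ => (1:ℝ))) μ :=
        aux_integrable_bdd' (measurable_const.indicator (hA.inter hF0)).aestronglyMeasurable
          (C := 1) (fun ω => by
            by_cases h : ω ∈ A ∩ X ⁻¹' B <;> simp [Set.indicator_apply, h])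
      have r2 : ∫ ω in E, (A ∩ X ⁻¹' B).indicator (fun _ => (1:ℝ)) ω ∂μ
          = ∫ ω in E, (μ[(A ∩ X ⁻¹' B).indicator (fun _ => (1:ℝ))|mσ]) ω ∂μ :=
        (setIntegral_condExp hm hindint hE).symm
      have hCI := (condIndepFun_iff_condExp_inter_preimage_eq_mul
        (hm' := hs.comap_le) ht hX).mp hunconf {1} B (measurableSet_singleton 1) hB
      have hAt : (μ⟦A|mσ⟧) =ᵐ[μ] fun ω => p (s ω) := by
        refine (condExp_congr_ae (Filter.Eventually.of_forall fun ω =>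
          (ht_ind ω).symm)).trans hprop
      have r3 : μ[(A ∩ X ⁻¹' B).indicator (fun _ => (1:ℝ))|mσ]
          =ᵐ[μ] fun ω => p (s ω) * (μ[χF|mσ]) ω := by
        refine hCI.trans ?_
        filter_upwards [hAt] with ω hω
        rw [hω]
      rw [l1, l2, r1, r2]
      exact integral_congr_ae ((ae_restrict_of_ae (l3.trans r3.symm)))
    · -- complement
      intro C hC hIH
      have hC0 : MeasurableSet C := hM _ hC
      have e1 := integral_add_compl hC0 hpsint
      have e2 := integral_add_compl hC0 htint
      have e3 : ∫ ω, p (s ω) ∂μ = ∫ ω, t ω ∂μ :=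
        (integral_congr_ae hprop.symm).trans (integral_condExp hm)
      linarith
    · -- disjoint union
      intro f hdisj hmeas hIH
      have hmeas0 : ∀ i, MeasurableSet (f i) := fun i => hM _ (hmeas i)
      rw [integral_iUnion hmeas0 hdisj hpsint.integrableOn,
        integral_iUnion hmeas0 hdisj htint.integrableOn]
      exact tsum_congr hIH
  -- conclude via the characterization of condexp
  refine (ae_eq_condExp_of_forall_setIntegral_eq hM htint
    (fun C hC _ => hpsint.integrableOn) (fun C hC _ => key C hC) ?_).symm
  exact ⟨_, (hpsmeas.mono (le_sup_left (b := mX)) le_rfl).stronglyMeasurable, Filter.EventuallyEq.rfl⟩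

lemma aux_term {Ω Q : Type*} {mΩ : MeasurableSpace Ω} (μ : Measure Ω) [IsProbabilityMeasure μ]
    [MeasurableSpace Q] {s : Ω → Q} (hs : Measurable s)
    {M : MeasurableSpace Ω} (hσM : MeasurableSpace.comap s inferInstance ≤ M) (hM : M ≤ mΩ)
    {τ : Ω → ℝ} (hτ : Measurable[mΩ] τ) (hτb : ∀ ω, |τ ω| ≤ 1)
    {f f' : Ω → ℝ} (hf'M : StronglyMeasurable[M] f') (hff' : f =ᵐ[μ] f') (hfint : Integrable f μ)
    {r mf nf : Q → ℝ} (hr : Measurable r) (hrb : ∀ x, |r x| ≤ 1) (hr0 : ∀ x, r x ≠ 0)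
    (hmf : Measurable mf) (hnf : Measurable nf) {Cn : ℝ} (hnb : ∀ x, |nf x| ≤ Cn)
    (hτM : μ[τ|M] =ᵐ[μ] fun ω => r (s ω))
    (hτσ : μ[τ|MeasurableSpace.comap s inferInstance] =ᵐ[μ] fun ω => r (s ω))
    (hcond : μ[f|MeasurableSpace.comap s inferInstance] =ᵐ[μ] fun ω => mf (s ω))
    (hw : Integrable (fun ω => τ ω * ((r (s ω))⁻¹ * (f ω - nf (s ω)))) μ) :
    μ[fun ω => τ ω * ((r (s ω))⁻¹ * (f ω - nf (s ω)))|MeasurableSpace.comap s inferInstance]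
      =ᵐ[μ] fun ω => mf (s ω) - nf (s ω) := by
  set mσ : MeasurableSpace Ω := MeasurableSpace.comap s inferInstance with hmσdef
  letI : MeasurableSpace Ω := mΩ
  have hm : mσ ≤ mΩ := hσM.trans hM
  have hsm : Measurable[mσ] s := fun _ hB => ⟨_, hB, rfl⟩
  -- measurability / integrability toolkit
  have hrs : Measurable[mσ] fun ω => r (s ω) := hr.comp hsm
  have hrs0 : Measurable fun ω => r (s ω) := hr.comp hs
  have hq : Measurable[mσ] fun ω => (r (s ω))⁻¹ := hrs.inv
  have hnfs : Measurable[mσ] fun ω => nf (s ω) := hnf.comp hsm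
  have hnfs0 : Measurable fun ω => nf (s ω) := hnf.comp hs
  have hf'int : Integrable f' μ := hfint.congr hff'
  have hf'aesm : AEStronglyMeasurable f' μ := hf'int.1
  have hτf' : Integrable (fun ω => τ ω * f' ω) μ :=
    hf'int.bdd_mul (hτ.aestronglyMeasurable (μ := μ)) (c := 1) (Filter.Eventually.of_forall fun ω => by simpa [Real.norm_eq_abs] using hτb ω)
  have hτnf : Integrable (fun ω => τ ω * nf (s ω)) μ := by
    refine aux_integrable_bdd' (C := Cn)
      (((hτ.mul hnfs0).aestronglyMeasurable (μ := μ))) (fun ω => ?_)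
    calc |τ ω * nf (s ω)| = |τ ω| * |nf (s ω)| := abs_mul _ _
      _ ≤ 1 * Cn := by
          refine mul_le_mul (hτb ω) (hnb _) (abs_nonneg _) zero_le_one
      _ = Cn := one_mul Cn
  have hg1 : Integrable (fun ω => τ ω * (f' ω - nf (s ω))) μ := by
    have := hτf'.sub hτnf
    refine this.congr (Filter.Eventually.of_forall fun ω => ?_)
    simp [mul_sub]
  have hw' : Integrable (fun ω => τ ω * ((r (s ω))⁻¹ * (f' ω - nf (s ω)))) μ := by
    refine hw.congr ?_
    filter_upwards [hff'] with ω h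
    rw [h]
  have hqg1 : Integrable (fun ω => (r (s ω))⁻¹ * (τ ω * (f' ω - nf (s ω)))) μ := by
    refine hw'.congr (Filter.Eventually.of_forall fun ω => ?_)
    ring
  -- step A: reduce to q * g1
  have stepA : μ[fun ω => τ ω * ((r (s ω))⁻¹ * (f ω - nf (s ω)))|mσ]
      =ᵐ[μ] μ[fun ω => (r (s ω))⁻¹ * (τ ω * (f' ω - nf (s ω)))|mσ] := by
    refine condExp_congr_ae ?_
    filter_upwards [hff'] with ω h
    rw [h]; ring
  -- step B: pull out q
  have stepB : μ[fun ω => (r (s ω))⁻¹ * (τ ω * (f' ω - nf (s ω)))|mσ]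
      =ᵐ[μ] fun ω => (r (s ω))⁻¹ * (μ[fun ω => τ ω * (f' ω - nf (s ω))|mσ]) ω :=
    condExp_mul_of_stronglyMeasurable_left hq.stronglyMeasurable hqg1 hg1
  -- step C: compute μ[τ * (f' - nf∘s)|mσ]
  have hC1 : μ[fun ω => τ ω * nf (s ω)|mσ] =ᵐ[μ] fun ω => nf (s ω) * r (s ω) := by
    have h1 : μ[fun ω => nf (s ω) * τ ω|mσ]
        =ᵐ[μ] fun ω => nf (s ω) * (μ[τ|mσ]) ω := by
      refine condExp_mul_of_stronglyMeasurable_left hnfs.stronglyMeasurable ?_ ?_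
      · exact hτnf.congr (Filter.Eventually.of_forall fun ω => by
          simp only [Pi.mul_apply]; ring)
      · exact aux_integrable_bdd' (hτ.aestronglyMeasurable (μ := μ)) hτb
    have h0 : μ[fun ω => τ ω * nf (s ω)|mσ] =ᵐ[μ] μ[fun ω => nf (s ω) * τ ω|mσ] :=
      condExp_congr_ae (Filter.Eventually.of_forall fun ω => by ring)
    refine (h0.trans h1).trans ?_
    filter_upwards [hτσ] with ω h
    rw [h]
  have hC2 : μ[fun ω => τ ω * f' ω|mσ] =ᵐ[μ] fun ω => r (s ω) * mf (s ω) := by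
    -- tower through M
    have tower : μ[μ[fun ω => τ ω * f' ω|M]|mσ] =ᵐ[μ] μ[fun ω => τ ω * f' ω|mσ] :=
      condExp_condExp_of_le hσM hM
    have hMpull : μ[fun ω => τ ω * f' ω|M] =ᵐ[μ] fun ω => f' ω * r (s ω) := by
      have h1 : μ[fun ω => f' ω * τ ω|M] =ᵐ[μ] fun ω => f' ω * (μ[τ|M]) ω :=
        condExp_mul_of_stronglyMeasurable_left hf'M
          (hτf'.congr (Filter.Eventually.of_forall fun ω => by
            simp only [Pi.mul_apply]; ring))
          (aux_integrable_bdd' (hτ.aestronglyMeasurable (μ := μ)) hτb)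
      have h0 : μ[fun ω => τ ω * f' ω|M] =ᵐ[μ] μ[fun ω => f' ω * τ ω|M] :=
        condExp_congr_ae (Filter.Eventually.of_forall fun ω => by ring)
      refine (h0.trans h1).trans ?_
      filter_upwards [hτM] with ω h
      rw [h]
    have hrf'int : Integrable (fun ω => r (s ω) * f' ω) μ :=
      hf'int.bdd_mul (hrs0.aestronglyMeasurable (μ := μ))
        (c := 1) (Filter.Eventually.of_forall fun ω => by simpa [Real.norm_eq_abs] using hrb (s ω))
    have hsecond : μ[fun ω => r (s ω) * f' ω|mσ]
        =ᵐ[μ] fun ω => r (s ω) * (μ[f'|mσ]) ω :=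
      condExp_mul_of_stronglyMeasurable_left hrs.stronglyMeasurable hrf'int hf'int
    have hf'cond : μ[f'|mσ] =ᵐ[μ] fun ω => mf (s ω) :=
      (condExp_congr_ae hff'.symm).trans hcond
    calc μ[fun ω => τ ω * f' ω|mσ]
        =ᵐ[μ] μ[μ[fun ω => τ ω * f' ω|M]|mσ] := tower.symm
      _ =ᵐ[μ] μ[fun ω => r (s ω) * f' ω|mσ] := by
          refine condExp_congr_ae ?_
          filter_upwards [hMpull] with ω h
          rw [h]; ring
      _ =ᵐ[μ] fun ω => r (s ω) * (μ[f'|mσ]) ω := hsecond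
      _ =ᵐ[μ] fun ω => r (s ω) * mf (s ω) := by
          filter_upwards [hf'cond] with ω h
          rw [h]
  have stepC : μ[fun ω => τ ω * (f' ω - nf (s ω))|mσ]
      =ᵐ[μ] fun ω => r (s ω) * mf (s ω) - nf (s ω) * r (s ω) := by
    have h0 : μ[fun ω => τ ω * (f' ω - nf (s ω))|mσ]
        =ᵐ[μ] μ[(fun ω => τ ω * f' ω) - (fun ω => τ ω * nf (s ω))|mσ] :=
      condExp_congr_ae (Filter.Eventually.of_forall fun ω => by
        simp [mul_sub])
    refine h0.trans ((condExp_sub hτf' hτnf _).trans ?_)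
    filter_upwards [hC1, hC2] with ω h1 h2
    simp only [Pi.sub_apply]
    rw [h1, h2]
  -- combine
  refine (stepA.trans stepB).trans ?_
  filter_upwards [stepC] with ω h
  rw [h]
  have := hr0 (s ω)
  field_simp


/-- Doubly robust pseudo-outcome with a possibly wrong outcome model but
correct propensity: if `φ = ((t − p(s))/(p(s)(1−p(s))))·(o − μ̃_t(s)) + μ̃₁(s) − μ̃₀(s)` with
arbitrary bounded measurable `μ̃₀, μ̃₁` and the true propensity `p`, then
`E[φ | s] = Δ(s) = μ₁(s) − μ₀(s)` still holds. -/
theorem dr_pseudo_outcome_robust_to_outcome_model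
    {Ω : Type*} [MeasurableSpace Ω] [StandardBorelSpace Ω]
    (μ : Measure Ω) [IsProbabilityMeasure μ]
    {Q : Type*} [MeasurableSpace Q]
    (s : Ω → Q) (hs : Measurable s)
    (t : Ω → ℝ) (ht : Measurable t) (ht01 : ∀ ω, t ω = 0 ∨ t ω = 1)
    (o0 o1 : Ω → ℝ) (ho0int : Integrable o0 μ) (ho1int : Integrable o1 μ)
    (p μ0 μ1 : Q → ℝ) (hp : Measurable p) (hμ0 : Measurable μ0) (hμ1 : Measurable μ1)
    (hppos : ∀ x, 0 < p x) (hplt : ∀ x, p x < 1)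
    -- propensity: P(t = 1 | s) = p(s)
    (hprop : μ[t | MeasurableSpace.comap s inferInstance] =ᵐ[μ] fun ω => p (s ω))
    -- conditional means of the potential outcomes
    (hcond1 : μ[o1 | MeasurableSpace.comap s inferInstance] =ᵐ[μ] fun ω => μ1 (s ω))
    (hcond0 : μ[o0 | MeasurableSpace.comap s inferInstance] =ᵐ[μ] fun ω => μ0 (s ω))
    -- unconfoundedness: t ⟂ (o⁽⁰⁾, o⁽¹⁾) | s
    (hunconf : CondIndepFun (MeasurableSpace.comap s inferInstance) (hs.comap_le)
      t (fun ω => (o0 ω, o1 ω)) μ)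
    -- misspecified (arbitrary bounded measurable) outcome regressions
    (ν0 ν1 : Q → ℝ) (hν0 : Measurable ν0) (hν1 : Measurable ν1)
    (hν0bd : ∃ C, ∀ x, |ν0 x| ≤ C) (hν1bd : ∃ C, ∀ x, |ν1 x| ≤ C)
    -- observed outcome and pseudo-outcome
    (o φ : Ω → ℝ)
    (ho : ∀ ω, o ω = t ω * o1 ω + (1 - t ω) * o0 ω)
    (hφ : ∀ ω, φ ω =
      ((t ω - p (s ω)) / (p (s ω) * (1 - p (s ω))))
        * (o ω - (t ω * ν1 (s ω) + (1 - t ω) * ν0 (s ω)))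
      + ν1 (s ω) - ν0 (s ω))
    (hφint : Integrable φ μ) :
    μ[φ | MeasurableSpace.comap s inferInstance] =ᵐ[μ] fun ω => μ1 (s ω) - μ0 (s ω) := by
  obtain ⟨C0, hν0b⟩ := hν0bd
  obtain ⟨C1, hν1b⟩ := hν1bd
  have hp0 : ∀ x, p x ≠ 0 := fun x => (hppos x).ne'
  have h1p0 : ∀ x, (1 : ℝ) - p x ≠ 0 := fun x => (sub_pos.mpr (hplt x)).ne'
  have hpb : ∀ x, |p x| ≤ 1 := fun x => abs_le.mpr ⟨by linarith [hppos x], (hplt x).le⟩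
  have h1pb : ∀ x, |1 - p x| ≤ 1 := fun x =>
    abs_le.mpr ⟨by linarith [hplt x], by linarith [hppos x]⟩
  have htb : ∀ ω, |t ω| ≤ 1 := fun ω => by rcases ht01 ω with h | h <;> simp [h]
  have h1tb : ∀ ω, |1 - t ω| ≤ 1 := fun ω => by rcases ht01 ω with h | h <;> simp [h]
  have htint : Integrable t μ := aux_integrable_bdd' ht.aestronglyMeasurable htb
  -- strongly measurable modifications of the potential outcomes
  set o0' : Ω → ℝ := (ho0int.1).mk o0 with ho0'def
  set o1' : Ω → ℝ := (ho1int.1).mk o1 with ho1'def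
  have ho0'sm : StronglyMeasurable o0' := ho0int.1.stronglyMeasurable_mk
  have ho1'sm : StronglyMeasurable o1' := ho1int.1.stronglyMeasurable_mk
  have ho0'ae : o0 =ᵐ[μ] o0' := ho0int.1.ae_eq_mk
  have ho1'ae : o1 =ᵐ[μ] o1' := ho1int.1.ae_eq_mk
  set X : Ω → ℝ × ℝ := fun ω => (o0' ω, o1' ω) with hXdef
  have hX : Measurable X := ho0'sm.measurable.prodMk ho1'sm.measurable
  have hXae : (fun ω => (o0 ω, o1 ω)) =ᵐ[μ] X := by
    filter_upwards [ho0'ae, ho1'ae] with ω h0 h1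
    simp only [hXdef, h0, h1]
  have hunconf' : CondIndepFun (MeasurableSpace.comap s inferInstance) hs.comap_le t X μ :=
    aux_condIndepFun_congr hs.comap_le hunconf hXae
  have hσM : MeasurableSpace.comap s inferInstance ≤
      MeasurableSpace.comap s inferInstance ⊔ MeasurableSpace.comap X inferInstance :=
    le_sup_left
  have hM : MeasurableSpace.comap s inferInstance ⊔ MeasurableSpace.comap X inferInstance ≤
      ‹MeasurableSpace Ω› := sup_le hs.comap_le hX.comap_le
  have hkey : μ[t|MeasurableSpace.comap s inferInstance ⊔ MeasurableSpace.comap X inferInstance]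
      =ᵐ[μ] fun ω => p (s ω) :=
    aux_condexp_sup μ hs hX ht ht01 hp hpb hprop hunconf'
  -- strong measurability of o0', o1' with respect to the sup σ-algebra
  have hXm : Measurable[MeasurableSpace.comap X inferInstance] X := fun _ hB => ⟨_, hB, rfl⟩
  have ho1'mX : Measurable[MeasurableSpace.comap X inferInstance] o1' :=
    measurable_snd.comp hXm
  have ho1'M : StronglyMeasurable[MeasurableSpace.comap s inferInstance ⊔
      MeasurableSpace.comap X inferInstance] o1' :=
    (ho1'mX.mono (le_sup_right (a := MeasurableSpace.comap s inferInstance)) le_rfl).stronglyMeasurable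
  have ho0'mX : Measurable[MeasurableSpace.comap X inferInstance] o0' :=
    measurable_fst.comp hXm
  have ho0'M : StronglyMeasurable[MeasurableSpace.comap s inferInstance ⊔
      MeasurableSpace.comap X inferInstance] o0' :=
    (ho0'mX.mono (le_sup_right (a := MeasurableSpace.comap s inferInstance)) le_rfl).stronglyMeasurable
  -- conditional expectations of 1 - t
  have h1t_eq : (fun ω => 1 - t ω) = (fun _ => (1:ℝ)) - t := by
    funext ω; simp
  have h1tM : μ[fun ω => 1 - t ω|MeasurableSpace.comap s inferInstance ⊔
      MeasurableSpace.comap X inferInstance] =ᵐ[μ] fun ω => 1 - p (s ω) := by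
    rw [h1t_eq]
    refine (condExp_sub (integrable_const (1:ℝ)) htint _).trans ?_
    filter_upwards [hkey] with ω h
    simp only [Pi.sub_apply, condExp_const hM (1:ℝ), h]
  have h1tσ : μ[fun ω => 1 - t ω|MeasurableSpace.comap s inferInstance]
      =ᵐ[μ] fun ω => 1 - p (s ω) := by
    rw [h1t_eq]
    refine (condExp_sub (integrable_const (1:ℝ)) htint _).trans ?_
    filter_upwards [hprop] with ω h
    simp only [Pi.sub_apply, condExp_const hs.comap_le (1:ℝ), h]
  -- the decomposition of φ
  set T1 : Ω → ℝ := fun ω => t ω * ((p (s ω))⁻¹ * (o1 ω - ν1 (s ω))) with hT1def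
  set T0 : Ω → ℝ := fun ω => (1 - t ω) * ((1 - p (s ω))⁻¹ * (o0 ω - ν0 (s ω))) with hT0def
  set f3 : Ω → ℝ := fun ω => ν1 (s ω) - ν0 (s ω) with hf3def
  have hdecomp : ∀ ω, φ ω = T1 ω - T0 ω + f3 ω := by
    intro ω
    rw [hφ ω, ho ω]
    simp only [hT1def, hT0def, hf3def]
    rcases ht01 ω with h | h <;> rw [h] <;>
      field_simp [hp0 (s ω), h1p0 (s ω)] <;> ring
  -- integrability of the pieces
  have hf3int : Integrable f3 μ := by
    refine aux_integrable_bdd' (C := C1 + C0)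
      (((hν1.comp hs).sub (hν0.comp hs)).aestronglyMeasurable) (fun ω => ?_)
    calc |ν1 (s ω) - ν0 (s ω)| ≤ |ν1 (s ω)| + |ν0 (s ω)| := abs_sub _ _
      _ ≤ C1 + C0 := add_le_add (hν1b _) (hν0b _)
  have hψint : Integrable (fun ω => T1 ω - T0 ω) μ := by
    have heq : (fun ω => T1 ω - T0 ω) = fun ω => φ ω - f3 ω := by
      funext ω; rw [hdecomp ω]; ring
    rw [heq]; exact hφint.sub hf3int
  have hT1int : Integrable T1 μ := by
    have h1 : Integrable (fun ω => t ω * (T1 ω - T0 ω)) μ :=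
      hψint.bdd_mul (ht.aestronglyMeasurable)
        (c := 1) (Filter.Eventually.of_forall fun ω => by simpa [Real.norm_eq_abs] using htb ω)
    refine h1.congr (Filter.Eventually.of_forall fun ω => ?_)
    show t ω * (T1 ω - T0 ω) = T1 ω
    rcases ht01 ω with h | h <;> simp [hT1def, hT0def, h]
  have hT0int : Integrable T0 μ := by
    have h1 : Integrable (fun ω => (1 - t ω) * (T1 ω - T0 ω)) μ :=
      hψint.bdd_mul ((measurable_const.sub ht).aestronglyMeasurable)
        (c := 1) (Filter.Eventually.of_forall fun ω => by simpa [Real.norm_eq_abs] using h1tb ω)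
    refine h1.neg.congr (Filter.Eventually.of_forall fun ω => ?_)
    show -((1 - t ω) * (T1 ω - T0 ω)) = T0 ω
    rcases ht01 ω with h | h <;> simp [hT1def, hT0def, h]
  -- the two main terms
  have hE1 : μ[T1|MeasurableSpace.comap s inferInstance]
      =ᵐ[μ] fun ω => μ1 (s ω) - ν1 (s ω) :=
    aux_term μ hs hσM hM ht htb ho1'M ho1'ae ho1int hp hpb hp0 hμ1 hν1 hν1b
      hkey hprop hcond1 hT1int
  have hE0 : μ[T0|MeasurableSpace.comap s inferInstance]
      =ᵐ[μ] fun ω => μ0 (s ω) - ν0 (s ω) :=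
    aux_term μ hs hσM hM (measurable_const.sub ht) h1tb ho0'M ho0'ae ho0int
      (measurable_const.sub hp) h1pb h1p0 hμ0 hν0 hν0b h1tM h1tσ hcond0 hT0int
  -- assemble
  have hstep : μ[φ|MeasurableSpace.comap s inferInstance]
      =ᵐ[μ] μ[(fun ω => T1 ω - T0 ω) + f3|MeasurableSpace.comap s inferInstance] := by
    refine condExp_congr_ae (Filter.Eventually.of_forall fun ω => ?_)
    simp only [Pi.add_apply]
    exact hdecomp ω
  have hadd := condExp_add (μ := μ) (m := MeasurableSpace.comap s inferInstance) hψint hf3int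
  have hsub := condExp_sub (μ := μ) (m := MeasurableSpace.comap s inferInstance) hT1int hT0int
  have hsm : Measurable[MeasurableSpace.comap s inferInstance] s := fun _ hB => ⟨_, hB, rfl⟩
  have hf3eq : μ[f3|MeasurableSpace.comap s inferInstance] = f3 :=
    condExp_of_stronglyMeasurable hs.comap_le
      (((hν1.comp hsm).sub (hν0.comp hsm)).stronglyMeasurable) hf3int
  have hsub' : μ[fun ω => T1 ω - T0 ω|MeasurableSpace.comap s inferInstance]
      =ᵐ[μ] fun ω => (μ1 (s ω) - ν1 (s ω)) - (μ0 (s ω) - ν0 (s ω)) := by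
    refine ((condExp_congr_ae (Filter.Eventually.of_forall fun ω => ?_)).trans hsub).trans ?_
    · show T1 ω - T0 ω = (T1 - T0) ω
      simp
    · filter_upwards [hE1, hE0] with ω h1 h0
      simp only [Pi.sub_apply, h1, h0]
  refine (hstep.trans ((hadd.trans ?_)))
  filter_upwards [hsub'] with ω h1
  simp only [Pi.add_apply, hf3eq, h1]
  simp only [hf3def]
  ring
end

section
/- Under the same setup, if the pseudo-outcome is constructed with the correct outcome regressions μ₀, μ₁ but a possibly wrong propensity p̃ with p̃(s) ∈ (0,1), i.e. φ = ((t − p̃(s))/(p̃(s)(1−p̃(s))))·(o − μ_t(s)) + μ₁(s) − μ₀(s), then E[φ | s] = Δ(s) still holds. -/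
open MeasureTheory ProbabilityTheory

open Filter Set
lemma condExp_mul_of_condIndepFun_aux {Ω : Type*} {m : MeasurableSpace Ω}
    [mΩ : MeasurableSpace Ω] [StandardBorelSpace Ω]
    (μ : Measure Ω) [IsProbabilityMeasure μ] (hm : m ≤ mΩ)
    {t X : Ω → ℝ} (ht : Measurable[mΩ] t)
    (htb : ∀ ω, ‖t ω‖ ≤ 1) (hXint : Integrable X μ)
    (hind : CondIndepFun m hm t X μ) :
    μ[fun ω => t ω * X ω|m] =ᵐ[μ] fun ω => (μ[t|m]) ω * (μ[X|m]) ω := by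
  have htint : Integrable t μ :=
    (integrable_const (1:ℝ)).mono' (ht.aestronglyMeasurable (μ := μ)) (Eventually.of_forall htb)
  have htX : Integrable (fun ω => t ω * X ω) μ :=
    hXint.bdd_mul (ht.aestronglyMeasurable (μ := μ)) (Eventually.of_forall htb)
  -- measurable modification of X
  have hXsm : AEStronglyMeasurable X μ := hXint.1
  set X' : Ω → ℝ := hXsm.mk X with hX'def
  have hX : Measurable X' := hXsm.stronglyMeasurable_mk.measurable
  have hXX' : X =ᵐ[μ] X' := hXsm.ae_eq_mk
  obtain ⟨N, hNsub, hNmeas, hNnull⟩ :=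
    exists_measurable_superset_of_null (ae_iff.1 hXX')
  have hNκ : ∀ᵐ ω ∂μ, condExpKernel μ m ω N = 0 := by
    have h := condExpKernel_ae_eq_condExp (μ := μ) hm hNmeas
    have h2 : (μ⟦N | m⟧) =ᵐ[μ] (0 : Ω → ℝ) := by
      have hind0 : N.indicator (fun _ => (1:ℝ)) =ᵐ[μ] (0 : Ω → ℝ) := by
        rw [Filter.EventuallyEq, ae_iff]
        refine measure_mono_null ?_ hNnull
        intro x hx
        simp only [Set.mem_setOf_eq] at hx
        by_contra hxN
        exact hx (by simp [Set.indicator_of_notMem hxN])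
      calc μ⟦N | m⟧ =ᵐ[μ] μ[(0 : Ω → ℝ)|m] := condExp_congr_ae hind0
        _ = 0 := condExp_zero
    filter_upwards [h.trans h2] with ω hω
    have hfin : condExpKernel μ m ω N ≠ ⊤ := measure_ne_top _ _
    simpa [measureReal_def, ENNReal.toReal_eq_zero_iff, hfin] using hω
  have h1 := condExp_ae_eq_integral_condExpKernel hm htX
  have h2 := condExp_ae_eq_integral_condExpKernel hm htint
  have h3 := condExp_ae_eq_integral_condExpKernel hm hXint
  have hQ : ∀ᵐ ω ∂μ, ∀ q r : ℚ,
      condExpKernel μ m ω (t ⁻¹' Iic (q:ℝ) ∩ X ⁻¹' Iic (r:ℝ))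
        = condExpKernel μ m ω (t ⁻¹' Iic (q:ℝ)) * condExpKernel μ m ω (X ⁻¹' Iic (r:ℝ)) := by
    rw [ae_all_iff]
    intro q
    rw [ae_all_iff]
    intro r
    exact ae_of_ae_trim hm
      (Kernel.indepFun_iff_measure_inter_preimage_eq_mul.1 hind _ _
        measurableSet_Iic measurableSet_Iic)
  filter_upwards [h1, h2, h3, hQ, hNκ] with ω e1 e2 e3 eQ0 eN
  have hsub : {x | ¬ X x = X' x} ⊆ N := hNsub
  have hXaeκ : X =ᵐ[condExpKernel μ m ω] X' := by
    rw [Filter.EventuallyEq, ae_iff]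
    exact measure_mono_null hsub eN
  have hmeq : ∀ (A : Set Ω) (B : Set ℝ),
      condExpKernel μ m ω (A ∩ X ⁻¹' B) = condExpKernel μ m ω (A ∩ X' ⁻¹' B) := by
    intro A B
    apply measure_congr
    rw [MeasureTheory.ae_eq_set]
    constructor
    · refine measure_mono_null ?_ eN
      rintro x ⟨⟨hxA, hxB⟩, hxn⟩
      exact hsub fun hEq => hxn ⟨hxA, by rw [Set.mem_preimage, ← hEq]; exact hxB⟩
    · refine measure_mono_null ?_ eN
      rintro x ⟨⟨hxA, hxB⟩, hxn⟩
      exact hsub fun hEq => hxn ⟨hxA, by rw [Set.mem_preimage, hEq]; exact hxB⟩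
  have eQ : ∀ q r : ℚ,
      condExpKernel μ m ω (t ⁻¹' Iic (q:ℝ) ∩ X' ⁻¹' Iic (r:ℝ))
        = condExpKernel μ m ω (t ⁻¹' Iic (q:ℝ)) * condExpKernel μ m ω (X' ⁻¹' Iic (r:ℝ)) := by
    intro q r
    rw [← hmeq, eQ0 q r]
    congr 1
    have := hmeq Set.univ (Iic (r:ℝ))
    simpa [Set.univ_inter] using this
  have hbor : (inferInstance : MeasurableSpace ℝ) = borel ℝ := BorelSpace.measurable_eq
  set p1 : Set (Set Ω) := (fun B => t ⁻¹' B) '' (Set.range fun q : ℚ => Iic (q:ℝ)) with hp1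
  set p2 : Set (Set Ω) := (fun B => X' ⁻¹' B) '' (Set.range fun q : ℚ => Iic (q:ℝ)) with hp2
  have hpiR : IsPiSystem (Set.range fun q : ℚ => Iic (q:ℝ)) := by
    rintro _ ⟨q, rfl⟩ _ ⟨r, rfl⟩ _
    exact ⟨min q r, by rw [Iic_inter_Iic, ← Rat.cast_min]⟩
  have hpi1 : IsPiSystem p1 := hpiR.comap t
  have hpi2 : IsPiSystem p2 := hpiR.comap X'
  have hgen1 : MeasurableSpace.comap t inferInstance = MeasurableSpace.generateFrom p1 := by
    rw [hbor, Real.borel_eq_generateFrom_Iic_rat, iUnion_singleton_eq_range,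
      MeasurableSpace.comap_generateFrom]
  have hgen2 : MeasurableSpace.comap X' inferInstance = MeasurableSpace.generateFrom p2 := by
    rw [hbor, Real.borel_eq_generateFrom_Iic_rat, iUnion_singleton_eq_range,
      MeasurableSpace.comap_generateFrom]
  have hip : IndepFun t X' (condExpKernel μ m ω) := by
    have hindep : ProbabilityTheory.Indep (MeasurableSpace.comap t inferInstance)
        (MeasurableSpace.comap X' inferInstance) (condExpKernel μ m ω) := by
      refine IndepSets.indep ht.comap_le hX.comap_le hpi1 hpi2 hgen1 hgen2 ?_
      rw [IndepSets_iff]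
      rintro _ _ ⟨A, ⟨q, rfl⟩, rfl⟩ ⟨B, ⟨r, rfl⟩, rfl⟩
      exact eQ q r
    exact hindep
  have hint1 : (∫ y, X y ∂condExpKernel μ m ω) = ∫ y, X' y ∂condExpKernel μ m ω :=
    integral_congr_ae hXaeκ
  have hint2 : (∫ y, t y * X y ∂condExpKernel μ m ω) = ∫ y, t y * X' y ∂condExpKernel μ m ω :=
    integral_congr_ae (hXaeκ.mono fun x hx => by dsimp only; rw [hx])
  rw [e1, e2, e3, hint1, hint2]
  exact IndepFun.integral_fun_mul_eq_mul_integral hip ht.aestronglyMeasurable hX.aestronglyMeasurable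

lemma dr_main_aux {Ω : Type*} {m : MeasurableSpace Ω}
    [mΩ : MeasurableSpace Ω] [StandardBorelSpace Ω]
    (μ : Measure Ω) [IsProbabilityMeasure μ] (hm : m ≤ mΩ)
    (t : Ω → ℝ) (ht : Measurable[mΩ] t) (ht01 : ∀ ω, t ω = 0 ∨ t ω = 1)
    (o0 o1 : Ω → ℝ) (ho0int : Integrable o0 μ) (ho1int : Integrable o1 μ)
    (M0 M1 Pt : Ω → ℝ)
    (hPt : Measurable[m] Pt) (hM0 : Measurable[m] M0) (hM1 : Measurable[m] M1)
    (hPtpos : ∀ ω, 0 < Pt ω) (hPtlt : ∀ ω, Pt ω < 1)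
    (hcond1 : μ[o1|m] =ᵐ[μ] M1) (hcond0 : μ[o0|m] =ᵐ[μ] M0)
    (hunconf : CondIndepFun m hm t (fun ω => (o0 ω, o1 ω)) μ)
    (o φ : Ω → ℝ)
    (ho : ∀ ω, o ω = t ω * o1 ω + (1 - t ω) * o0 ω)
    (hφ : ∀ ω, φ ω =
      ((t ω - Pt ω) / (Pt ω * (1 - Pt ω)))
        * (o ω - (t ω * M1 ω + (1 - t ω) * M0 ω)) + M1 ω - M0 ω)
    (hφint : Integrable φ μ) :
    μ[φ|m] =ᵐ[μ] fun ω => M1 ω - M0 ω := by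
  haveI : SigmaFinite (μ.trim hm) := inferInstance
  have htb : ∀ ω, ‖t ω‖ ≤ 1 := fun ω => by rcases ht01 ω with h | h <;> simp [h]
  have h1tb : ∀ ω, ‖1 - t ω‖ ≤ 1 := fun ω => by rcases ht01 ω with h | h <;> simp [h]
  have h1tm : Measurable[mΩ] (fun ω => 1 - t ω) := measurable_const.sub ht
  have htint : Integrable t μ :=
    (integrable_const (1:ℝ)).mono' (ht.aestronglyMeasurable (μ := μ)) (Filter.Eventually.of_forall htb)
  have hM1int : Integrable M1 μ := integrable_condExp.congr hcond1
  have hM0int : Integrable M0 μ := integrable_condExp.congr hcond0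
  have hΔint : Integrable (fun ω => M1 ω - M0 ω) μ := hM1int.sub hM0int
  -- conditional independences with each coordinate
  have hind1 : CondIndepFun m hm t o1 μ := by
    have h := hunconf.comp measurable_id measurable_snd
    exact h
  have hind0 : CondIndepFun m hm t o0 μ := by
    have h := hunconf.comp measurable_id measurable_fst
    exact h
  -- product rules
  have hK1 : μ[fun ω => t ω * o1 ω|m] =ᵐ[μ] fun ω => (μ[t|m]) ω * M1 ω := by
    refine (condExp_mul_of_condIndepFun_aux μ hm ht htb ho1int hind1).trans ?_
    filter_upwards [hcond1] with ω h
    rw [h]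
  have hK0 : μ[fun ω => t ω * o0 ω|m] =ᵐ[μ] fun ω => (μ[t|m]) ω * M0 ω := by
    refine (condExp_mul_of_condIndepFun_aux μ hm ht htb ho0int hind0).trans ?_
    filter_upwards [hcond0] with ω h
    rw [h]
  -- pull-out rules
  have hto1int : Integrable (fun ω => t ω * o1 ω) μ :=
    ho1int.bdd_mul (ht.aestronglyMeasurable (μ := μ)) (Filter.Eventually.of_forall htb)
  have hto0int : Integrable (fun ω => t ω * o0 ω) μ :=
    ho0int.bdd_mul (ht.aestronglyMeasurable (μ := μ)) (Filter.Eventually.of_forall htb)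
  have htM1int : Integrable (fun ω => t ω * M1 ω) μ :=
    hM1int.bdd_mul (ht.aestronglyMeasurable (μ := μ)) (Filter.Eventually.of_forall htb)
  have htM0int : Integrable (fun ω => t ω * M0 ω) μ :=
    hM0int.bdd_mul (ht.aestronglyMeasurable (μ := μ)) (Filter.Eventually.of_forall htb)
  have hP1 : μ[fun ω => t ω * M1 ω|m] =ᵐ[μ] fun ω => M1 ω * (μ[t|m]) ω := by
    have h := condExp_mul_of_stronglyMeasurable_left (μ := μ) (hM1.stronglyMeasurable) 
      (htM1int.congr (Filter.Eventually.of_forall fun ω => by dsimp only [Pi.mul_apply]; ring))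
      htint
    refine EventuallyEq.trans ?_ h
    refine condExp_congr_ae (Filter.Eventually.of_forall fun ω => ?_)
    dsimp only [Pi.mul_apply]
    ring
  have hP0 : μ[fun ω => t ω * M0 ω|m] =ᵐ[μ] fun ω => M0 ω * (μ[t|m]) ω := by
    have h := condExp_mul_of_stronglyMeasurable_left (μ := μ) (hM0.stronglyMeasurable)
      (htM0int.congr (Filter.Eventually.of_forall fun ω => by dsimp only [Pi.mul_apply]; ring))
      htint
    refine EventuallyEq.trans ?_ h
    refine condExp_congr_ae (Filter.Eventually.of_forall fun ω => ?_)
    dsimp only [Pi.mul_apply]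
    ring
  -- conditional expectation of the two residual terms is zero
  have hg1int : Integrable (fun ω => t ω * o1 ω - t ω * M1 ω) μ := hto1int.sub htM1int
  have hg0int : Integrable (fun ω => (o0 ω - t ω * o0 ω) - (M0 ω - t ω * M0 ω)) μ :=
    (ho0int.sub hto0int).sub (hM0int.sub htM0int)
  have hEg1 : μ[fun ω => t ω * o1 ω - t ω * M1 ω|m] =ᵐ[μ] 0 := by
    have h := condExp_sub (μ := μ) (m := m) hto1int htM1int
    refine h.trans ?_
    filter_upwards [hK1, hP1] with ω e1 e2
    simp only [Pi.sub_apply, Pi.zero_apply]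
    rw [e1, e2]
    ring
  have hEg0 : μ[fun ω => (o0 ω - t ω * o0 ω) - (M0 ω - t ω * M0 ω)|m] =ᵐ[μ] 0 := by
    have h := condExp_sub (μ := μ) (m := m) (ho0int.sub hto0int) (hM0int.sub htM0int)
    have h2 := condExp_sub (μ := μ) (m := m) ho0int hto0int
    have h3 := condExp_sub (μ := μ) (m := m) hM0int htM0int
    refine h.trans ?_
    filter_upwards [h2, h3, hK0, hP0, hcond0] with ω e2 e3 eK eP eC
    simp only [Pi.sub_apply, Pi.zero_apply]
    rw [e2, e3]
    simp only [Pi.sub_apply]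
    rw [eK, eP, eC]
    have hM0c : (μ[M0|m]) ω = M0 ω := by
      rw [condExp_of_stronglyMeasurable hm (hM0.stronglyMeasurable) hM0int]
    rw [hM0c]
    ring
  -- multiply by the m-measurable factors
  have hc1m : Measurable[m] (fun ω => (Pt ω)⁻¹) := hPt.inv
  have hc0m : Measurable[m] (fun ω => -((1 - Pt ω)⁻¹)) := ((measurable_const.sub hPt).inv).neg
  -- key pointwise identities
  have hkey1 : ∀ ω, t ω * (φ ω - (M1 ω - M0 ω))
      = (Pt ω)⁻¹ * (t ω * o1 ω - t ω * M1 ω) := by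
    intro ω
    have h0 : Pt ω ≠ 0 := (hPtpos ω).ne'
    have h1 : (1:ℝ) - Pt ω ≠ 0 := sub_ne_zero.2 (hPtlt ω).ne'
    rw [hφ ω, ho ω]
    rcases ht01 ω with h | h <;> rw [h] <;> field_simp <;> ring
  have hkey0 : ∀ ω, (1 - t ω) * (φ ω - (M1 ω - M0 ω))
      = -((1 - Pt ω)⁻¹) * ((o0 ω - t ω * o0 ω) - (M0 ω - t ω * M0 ω)) := by
    intro ω
    have h0 : Pt ω ≠ 0 := (hPtpos ω).ne'
    have h1 : (1:ℝ) - Pt ω ≠ 0 := sub_ne_zero.2 (hPtlt ω).ne'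
    rw [hφ ω, ho ω]
    rcases ht01 ω with h | h <;> rw [h] <;> field_simp <;> ring
  have hφΔint : Integrable (fun ω => φ ω - (M1 ω - M0 ω)) μ := hφint.sub hΔint
  have hF1int : Integrable (fun ω => (Pt ω)⁻¹ * (t ω * o1 ω - t ω * M1 ω)) μ := by
    refine (hφΔint.bdd_mul (ht.aestronglyMeasurable (μ := μ))
      (Filter.Eventually.of_forall htb)).congr ?_
    exact Filter.Eventually.of_forall fun ω => hkey1 ω
  have hF0int : Integrable
      (fun ω => -((1 - Pt ω)⁻¹) * ((o0 ω - t ω * o0 ω) - (M0 ω - t ω * M0 ω))) μ := by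
    refine (hφΔint.bdd_mul (h1tm.aestronglyMeasurable (μ := μ))
      (Filter.Eventually.of_forall h1tb)).congr ?_
    exact Filter.Eventually.of_forall fun ω => hkey0 ω
  have hEF1 : μ[fun ω => (Pt ω)⁻¹ * (t ω * o1 ω - t ω * M1 ω)|m] =ᵐ[μ] 0 := by
    have h := condExp_mul_of_stronglyMeasurable_left (μ := μ) (hc1m.stronglyMeasurable)
      (hF1int.congr (Filter.Eventually.of_forall fun ω => by dsimp only [Pi.mul_apply]))
      hg1int
    refine EventuallyEq.trans ?_ (h.trans ?_)
    · exact condExp_congr_ae (Filter.Eventually.of_forall fun ω => by dsimp only [Pi.mul_apply])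
    · filter_upwards [hEg1] with ω e
      simp only [Pi.mul_apply, Pi.zero_apply] at e ⊢
      rw [e, mul_zero]
  have hEF0 : μ[fun ω => -((1 - Pt ω)⁻¹) * ((o0 ω - t ω * o0 ω) - (M0 ω - t ω * M0 ω))|m]
      =ᵐ[μ] 0 := by
    have h := condExp_mul_of_stronglyMeasurable_left (μ := μ) (hc0m.stronglyMeasurable)
      (hF0int.congr (Filter.Eventually.of_forall fun ω => by dsimp only [Pi.mul_apply]))
      hg0int
    refine EventuallyEq.trans ?_ (h.trans ?_)
    · exact condExp_congr_ae (Filter.Eventually.of_forall fun ω => by dsimp only [Pi.mul_apply])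
    · filter_upwards [hEg0] with ω e
      simp only [Pi.mul_apply, Pi.zero_apply] at e ⊢
      rw [e, mul_zero]
  -- assemble
  have hφdecomp : ∀ ω, φ ω =
      ((Pt ω)⁻¹ * (t ω * o1 ω - t ω * M1 ω)
        + -((1 - Pt ω)⁻¹) * ((o0 ω - t ω * o0 ω) - (M0 ω - t ω * M0 ω)))
      + (M1 ω - M0 ω) := by
    intro ω
    have e1 := hkey1 ω
    have e0 := hkey0 ω
    have : (t ω) * (φ ω - (M1 ω - M0 ω)) + (1 - t ω) * (φ ω - (M1 ω - M0 ω))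
        = φ ω - (M1 ω - M0 ω) := by ring
    rw [e1, e0] at this
    linarith [this]
  have hsum : μ[φ|m] =ᵐ[μ]
      μ[fun ω => ((Pt ω)⁻¹ * (t ω * o1 ω - t ω * M1 ω)
        + -((1 - Pt ω)⁻¹) * ((o0 ω - t ω * o0 ω) - (M0 ω - t ω * M0 ω)))
        + (M1 ω - M0 ω)|m] :=
    condExp_congr_ae (Filter.Eventually.of_forall hφdecomp)
  refine hsum.trans ?_
  have hadd := condExp_add (μ := μ) (m := m) (hF1int.add hF0int) hΔint
  refine hadd.trans ?_
  have hadd2 := condExp_add (μ := μ) (m := m) hF1int hF0int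
  have hΔ : μ[fun ω => M1 ω - M0 ω|m] = fun ω => M1 ω - M0 ω :=
    condExp_of_stronglyMeasurable hm ((hM1.sub hM0).stronglyMeasurable) hΔint
  filter_upwards [hadd2, hEF1, hEF0] with ω e2 eF1 eF0
  simp only [Pi.add_apply, Pi.zero_apply] at *
  rw [e2, eF1, eF0, hΔ]
  ring

/-- Doubly robust pseudo-outcome with correct outcome regressions
`μ₀, μ₁` but a possibly wrong propensity `p̃` with values in `(0,1)`:
`φ = ((t − p̃(s))/(p̃(s)(1−p̃(s))))·(o − μ_t(s)) + μ₁(s) − μ₀(s)` still satisfies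
`E[φ | s] = Δ(s) = μ₁(s) − μ₀(s)`. -/
theorem dr_pseudo_outcome_robust_to_propensity
    {Ω : Type*} [MeasurableSpace Ω] [StandardBorelSpace Ω]
    (μ : Measure Ω) [IsProbabilityMeasure μ]
    {Q : Type*} [MeasurableSpace Q]
    (s : Ω → Q) (hs : Measurable s)
    (t : Ω → ℝ) (ht : Measurable t) (ht01 : ∀ ω, t ω = 0 ∨ t ω = 1)
    (o0 o1 : Ω → ℝ) (ho0int : Integrable o0 μ) (ho1int : Integrable o1 μ)
    (p μ0 μ1 : Q → ℝ) (hp : Measurable p) (hμ0 : Measurable μ0) (hμ1 : Measurable μ1)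
    (hppos : ∀ x, 0 < p x) (hplt : ∀ x, p x < 1)
    -- propensity: P(t = 1 | s) = p(s)
    (hprop : μ[t | MeasurableSpace.comap s inferInstance] =ᵐ[μ] fun ω => p (s ω))
    -- conditional means of the potential outcomes
    (hcond1 : μ[o1 | MeasurableSpace.comap s inferInstance] =ᵐ[μ] fun ω => μ1 (s ω))
    (hcond0 : μ[o0 | MeasurableSpace.comap s inferInstance] =ᵐ[μ] fun ω => μ0 (s ω))
    -- unconfoundedness: t ⟂ (o⁽⁰⁾, o⁽¹⁾) | s
    (hunconf : CondIndepFun (MeasurableSpace.comap s inferInstance) (hs.comap_le)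
      t (fun ω => (o0 ω, o1 ω)) μ)
    -- misspecified propensity, an arbitrary measurable function with values in (0,1)
    (ptil : Q → ℝ) (hptil : Measurable ptil)
    (hptilpos : ∀ x, 0 < ptil x) (hptillt : ∀ x, ptil x < 1)
    -- observed outcome and pseudo-outcome
    (o φ : Ω → ℝ)
    (ho : ∀ ω, o ω = t ω * o1 ω + (1 - t ω) * o0 ω)
    (hφ : ∀ ω, φ ω =
      ((t ω - ptil (s ω)) / (ptil (s ω) * (1 - ptil (s ω))))
        * (o ω - (t ω * μ1 (s ω) + (1 - t ω) * μ0 (s ω)))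
      + μ1 (s ω) - μ0 (s ω))
    (hφint : Integrable φ μ) :
    μ[φ | MeasurableSpace.comap s inferInstance] =ᵐ[μ] fun ω => μ1 (s ω) - μ0 (s ω) := by
  have hsm : Measurable[MeasurableSpace.comap s inferInstance] s :=
    measurable_iff_comap_le.2 le_rfl
  exact dr_main_aux μ hs.comap_le t ht ht01 o0 o1 ho0int ho1int
    (fun ω => μ0 (s ω)) (fun ω => μ1 (s ω)) (fun ω => ptil (s ω))
    (hptil.comp hsm) (hμ0.comp hsm) (hμ1.comp hsm)
    (fun ω => hptilpos (s ω)) (fun ω => hptillt (s ω))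
    hcond1 hcond0 hunconf o φ ho
    (fun ω => by rw [hφ ω])
    hφint
end

section
/- In the R-learner population objective, the true CATE minimizes the orthogonalized squared loss: with γ(s) = E[o | s], p(s) = P(t=1 | s) ∈ (0,1), and Var(t | s) = p(s)(1−p(s)) > 0, the function Δ(s) = μ₁(s) − μ₀(s) is the unique (up to a.s. equality) minimizer over measurable square-integrable h of E[(o − γ(s) − (t − p(s))·h(s))²], provided unconfoundedness holds and E[o − μ_t(s) | s, t] = 0. -/
open MeasureTheory ProbabilityTheory

private lemma integrable_mul_of_memL2 {Ω : Type*} {mΩ : MeasurableSpace Ω} {μ : Measure Ω}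
    {f g : Ω → ℝ} (hf : MemLp f 2 μ) (hg : MemLp g 2 μ) :
    Integrable (fun ω => f ω * g ω) μ := by
  have hint : Integrable (fun ω => (f ω ^ 2 + g ω ^ 2) / 2) μ :=
    (hf.integrable_sq.add hg.integrable_sq).div_const 2
  refine hint.mono' (hf.aestronglyMeasurable.mul hg.aestronglyMeasurable) ?_
  filter_upwards with ω
  have h1 : ‖f ω * g ω‖ = |f ω| * |g ω| := by
    rw [Real.norm_eq_abs, abs_mul]
  rw [h1]
  nlinarith [sq_nonneg (|f ω| - |g ω|), sq_abs (f ω), sq_abs (g ω), abs_nonneg (f ω),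
    abs_nonneg (g ω)]

/-- R-learner population objective: with `γ(s) = E[o|s]`,
propensity `p(s) ∈ (0,1)` (so `Var(t|s) = p(s)(1−p(s)) > 0`), unconfoundedness, and
`E[o − μ_t(s) | s, t] = 0`, the CATE `Δ = μ₁ − μ₀` is the unique (up to a.s. equality)
minimizer over measurable square-integrable `h` of
`E[(o − γ(s) − (t − p(s))·h(s))²]`. -/
theorem r_learner_population_minimizer
    {Ω : Type*} [MeasurableSpace Ω] [StandardBorelSpace Ω]
    (μ : Measure Ω) [IsProbabilityMeasure μ]
    {Q : Type*} [MeasurableSpace Q]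
    (s : Ω → Q) (hs : Measurable s)
    (t : Ω → ℝ) (ht : Measurable t) (ht01 : ∀ ω, t ω = 0 ∨ t ω = 1)
    (o0 o1 : Ω → ℝ) (ho0 : MemLp o0 2 μ) (ho1 : MemLp o1 2 μ)
    (p μ0 μ1 γ : Q → ℝ) (hp : Measurable p) (hμ0 : Measurable μ0) (hμ1 : Measurable μ1)
    (hγ : Measurable γ)
    (hppos : ∀ x, 0 < p x) (hplt : ∀ x, p x < 1)
    (hprop : μ[t | MeasurableSpace.comap s inferInstance] =ᵐ[μ] fun ω => p (s ω))
    (hcond1 : μ[o1 | MeasurableSpace.comap s inferInstance] =ᵐ[μ] fun ω => μ1 (s ω))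
    (hcond0 : μ[o0 | MeasurableSpace.comap s inferInstance] =ᵐ[μ] fun ω => μ0 (s ω))
    (hunconf : CondIndepFun (MeasurableSpace.comap s inferInstance) (hs.comap_le)
      t (fun ω => (o0 ω, o1 ω)) μ)
    (o : Ω → ℝ) (ho : ∀ ω, o ω = t ω * o1 ω + (1 - t ω) * o0 ω)
    -- γ(s) = E[o | s]
    (hγcond : μ[o | MeasurableSpace.comap s inferInstance] =ᵐ[μ] fun ω => γ (s ω))
    -- E[o − μ_t(s) | s, t] = 0
    (hres : μ[(fun ω => o ω - (t ω * μ1 (s ω) + (1 - t ω) * μ0 (s ω)))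
        | MeasurableSpace.comap (fun ω => (s ω, t ω)) inferInstance] =ᵐ[μ] 0)
    (hμ02 : MemLp (fun ω => μ0 (s ω)) 2 μ) (hμ12 : MemLp (fun ω => μ1 (s ω)) 2 μ)
    (hγ2 : MemLp (fun ω => γ (s ω)) 2 μ) :
    (∀ h : Q → ℝ, Measurable h → MemLp (fun ω => h (s ω)) 2 μ →
        ∫ ω, (o ω - γ (s ω) - (t ω - p (s ω)) * (μ1 (s ω) - μ0 (s ω))) ^ 2 ∂μ
          ≤ ∫ ω, (o ω - γ (s ω) - (t ω - p (s ω)) * h (s ω)) ^ 2 ∂μ)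
      ∧ (∀ h : Q → ℝ, Measurable h → MemLp (fun ω => h (s ω)) 2 μ →
          ∫ ω, (o ω - γ (s ω) - (t ω - p (s ω)) * h (s ω)) ^ 2 ∂μ
            = ∫ ω, (o ω - γ (s ω) - (t ω - p (s ω)) * (μ1 (s ω) - μ0 (s ω))) ^ 2 ∂μ →
          (fun ω => h (s ω)) =ᵐ[μ] fun ω => μ1 (s ω) - μ0 (s ω)) := by
  classical
  have hm := hs.comap_le
  have hm2 := (hs.prodMk ht).comap_le
  have hm12 : (MeasurableSpace.comap s inferInstance : MeasurableSpace Ω)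
      ≤ MeasurableSpace.comap (fun ω => (s ω, t ω)) inferInstance := by
    have h1 : (MeasurableSpace.comap s inferInstance : MeasurableSpace Ω)
        = MeasurableSpace.comap (fun ω => (s ω, t ω))
          (MeasurableSpace.comap (Prod.fst : Q × ℝ → Q) inferInstance) := by
      rw [MeasurableSpace.comap_comp]; rfl
    rw [h1]
    exact MeasurableSpace.comap_mono measurable_fst.comap_le
  -- measurability of compositions w.r.t. (MeasurableSpace.comap s inferInstance) and (MeasurableSpace.comap (fun ω => (s ω, t ω)) inferInstance)
  have hsm : Measurable[MeasurableSpace.comap s inferInstance] s := Measurable.of_comap_le le_rfl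
  have hstm : Measurable[(MeasurableSpace.comap (fun ω => (s ω, t ω)) inferInstance)] (fun ω => (s ω, t ω)) := Measurable.of_comap_le le_rfl
  have htm2 : Measurable[(MeasurableSpace.comap (fun ω => (s ω, t ω)) inferInstance)] t := (measurable_snd.comp hstm : _)
  have hsm2 : Measurable[(MeasurableSpace.comap (fun ω => (s ω, t ω)) inferInstance)] s := (measurable_fst.comp hstm : _)
  -- bounds on treatment-type quantities
  have ht1 : ∀ ω, |t ω| ≤ 1 := by
    intro ω; rcases ht01 ω with h | h <;> rw [h] <;> norm_num
  have h1t : ∀ ω, |1 - t ω| ≤ 1 := by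
    intro ω; rcases ht01 ω with h | h <;> rw [h] <;> norm_num
  have htp : ∀ ω, |t ω - p (s ω)| ≤ 1 := by
    intro ω
    have h1 := hppos (s ω); have h2 := hplt (s ω)
    rcases ht01 ω with h | h <;> rw [h] <;> rw [abs_le] <;> constructor <;> linarith
  have htpne : ∀ ω, t ω - p (s ω) ≠ 0 := by
    intro ω
    have h1 := hppos (s ω); have h2 := hplt (s ω)
    rcases ht01 ω with h | h <;> rw [h] <;> intro hc <;> linarith
  -- MemLp facts
  have hΔ2 : MemLp (fun ω => μ1 (s ω) - μ0 (s ω)) 2 μ := hμ12.sub hμ02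
  have hto1 : MemLp (fun ω => t ω * o1 ω) 2 μ := by
    refine MemLp.of_le ho1 (ht.aestronglyMeasurable.mul ho1.aestronglyMeasurable) ?_
    filter_upwards with ω
    rw [Real.norm_eq_abs, Real.norm_eq_abs, abs_mul]
    exact mul_le_of_le_one_left (abs_nonneg _) (ht1 ω)
  have hto0 : MemLp (fun ω => (1 - t ω) * o0 ω) 2 μ := by
    refine MemLp.of_le ho0 (((measurable_const.sub ht).aestronglyMeasurable).mul
      ho0.aestronglyMeasurable) ?_
    filter_upwards with ω
    rw [Real.norm_eq_abs, Real.norm_eq_abs, abs_mul]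
    exact mul_le_of_le_one_left (abs_nonneg _) (h1t ω)
  have ho2 : MemLp o 2 μ := by
    rw [show o = fun ω => t ω * o1 ω + (1 - t ω) * o0 ω from funext ho]
    exact hto1.add hto0
  have htμ1 : MemLp (fun ω => t ω * μ1 (s ω)) 2 μ := by
    refine MemLp.of_le hμ12 (ht.aestronglyMeasurable.mul hμ12.aestronglyMeasurable) ?_
    filter_upwards with ω
    rw [Real.norm_eq_abs, Real.norm_eq_abs, abs_mul]
    exact mul_le_of_le_one_left (abs_nonneg _) (ht1 ω)
  have htμ0 : MemLp (fun ω => (1 - t ω) * μ0 (s ω)) 2 μ := by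
    refine MemLp.of_le hμ02 (((measurable_const.sub ht).aestronglyMeasurable).mul
      hμ02.aestronglyMeasurable) ?_
    filter_upwards with ω
    rw [Real.norm_eq_abs, Real.norm_eq_abs, abs_mul]
    exact mul_le_of_le_one_left (abs_nonneg _) (h1t ω)
  -- the residual r and the minimizer residual ε
  set r : Ω → ℝ := fun ω => o ω - (t ω * μ1 (s ω) + (1 - t ω) * μ0 (s ω)) with hr_def
  set ε : Ω → ℝ := fun ω => o ω - γ (s ω) - (t ω - p (s ω)) * (μ1 (s ω) - μ0 (s ω))
    with hε_def
  have hr2 : MemLp r 2 μ := ho2.sub (htμ1.add htμ0)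
  have hε2 : MemLp ε 2 μ := by
    refine (ho2.sub hγ2).sub (MemLp.of_le hΔ2 (((ht.sub (hp.comp hs)).mul
      ((hμ1.comp hs).sub (hμ0.comp hs))).aestronglyMeasurable) ?_)
    filter_upwards with ω
    rw [Real.norm_eq_abs, Real.norm_eq_abs, abs_mul]
    exact mul_le_of_le_one_left (abs_nonneg _) (htp ω)
  -- E[r | s] = 0
  have hrm : μ[r | (MeasurableSpace.comap s inferInstance)] =ᵐ[μ] 0 := by
    have h1 : μ[μ[r | (MeasurableSpace.comap (fun ω => (s ω, t ω)) inferInstance)] | (MeasurableSpace.comap s inferInstance)] =ᵐ[μ] μ[r | (MeasurableSpace.comap s inferInstance)] := condExp_condExp_of_le hm12 hm2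
    have h2 : μ[μ[r | (MeasurableSpace.comap (fun ω => (s ω, t ω)) inferInstance)] | (MeasurableSpace.comap s inferInstance)] =ᵐ[μ] μ[(0 : Ω → ℝ) | (MeasurableSpace.comap s inferInstance)] := condExp_congr_ae hres
    refine h1.symm.trans (h2.trans ?_)
    rw [condExp_zero]
  -- γ(s) = μ0(s) + p(s) Δ(s)  a.e.
  have ht_int : Integrable t μ := by
    refine (integrable_const (1 : ℝ)).mono' ht.aestronglyMeasurable ?_
    filter_upwards with ω
    rw [Real.norm_eq_abs]; exact ht1 ω
  have hΔm : StronglyMeasurable[MeasurableSpace.comap s inferInstance] (fun ω => μ1 (s ω) - μ0 (s ω)) :=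
    (((hμ1.sub hμ0).comp hsm) : Measurable[MeasurableSpace.comap s inferInstance] _).stronglyMeasurable
  have hΔt_int : Integrable (fun ω => (μ1 (s ω) - μ0 (s ω)) * t ω) μ :=
    integrable_mul_of_memL2 hΔ2 (memLp_top_of_bound ht.aestronglyMeasurable 1
      (Filter.Eventually.of_forall fun ω => by rw [Real.norm_eq_abs]; exact ht1 ω)
      |>.mono_exponent le_top)
  have hμ0s_int : Integrable (fun ω => μ0 (s ω)) μ := hμ02.integrable one_le_two
  have hoeq : o = fun ω => r ω + ((fun ω' => μ0 (s ω')) ω +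
      (fun ω' => (μ1 (s ω') - μ0 (s ω')) * t ω') ω) := by
    funext ω; simp only [hr_def]; ring
  have hcross_mul : μ[(fun ω => (μ1 (s ω) - μ0 (s ω)) * t ω) | (MeasurableSpace.comap s inferInstance)]
      =ᵐ[μ] fun ω => (μ1 (s ω) - μ0 (s ω)) * p (s ω) := by
    have h1 := condExp_mul_of_stronglyMeasurable_left hΔm hΔt_int ht_int
    refine h1.trans ?_
    filter_upwards [hprop] with ω hω
    simp only [Pi.mul_apply, hω]
  have hγeq : (fun ω => γ (s ω)) =ᵐ[μ]
      fun ω => μ0 (s ω) + p (s ω) * (μ1 (s ω) - μ0 (s ω)) := by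
    have h1 : μ[o | (MeasurableSpace.comap s inferInstance)] =ᵐ[μ] μ[r | (MeasurableSpace.comap s inferInstance)] + μ[(fun ω => μ0 (s ω) +
        (μ1 (s ω) - μ0 (s ω)) * t ω) | (MeasurableSpace.comap s inferInstance)] := by
      have := condExp_add (m := MeasurableSpace.comap s inferInstance) (hr2.integrable one_le_two)
        (hμ0s_int.add hΔt_int) (μ := μ)
      refine Filter.EventuallyEq.trans ?_ this
      exact condExp_congr_ae (Filter.EventuallyEq.of_eq (by funext ω; simp only [hr_def, Pi.add_apply]; ring))
    have h2 : μ[(fun ω => μ0 (s ω) + (μ1 (s ω) - μ0 (s ω)) * t ω) | (MeasurableSpace.comap s inferInstance)]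
        =ᵐ[μ] (fun ω => μ0 (s ω)) + fun ω => (μ1 (s ω) - μ0 (s ω)) * p (s ω) := by
      refine (condExp_add (m := MeasurableSpace.comap s inferInstance) hμ0s_int hΔt_int).trans ?_
      have h3 : μ[(fun ω => μ0 (s ω)) | (MeasurableSpace.comap s inferInstance)] = fun ω => μ0 (s ω) :=
        condExp_of_stronglyMeasurable hm
          (((hμ0.comp hsm) : Measurable[MeasurableSpace.comap s inferInstance] _).stronglyMeasurable) hμ0s_int
      filter_upwards [hcross_mul] with ω hω
      simp only [Pi.add_apply, h3, hω]
    refine hγcond.symm.trans (h1.trans ?_)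
    filter_upwards [hrm, h2] with ω h1ω h2ω
    simp only [Pi.add_apply] at h1ω h2ω ⊢
    rw [h1ω, h2ω]
    simp only [Pi.zero_apply, Pi.add_apply]
    ring
  have hεr : ε =ᵐ[μ] r := by
    filter_upwards [hγeq] with ω hω
    simp only [hε_def, hr_def, hω]; ring
  -- key decomposition
  have key : ∀ h : Q → ℝ, Measurable h → MemLp (fun ω => h (s ω)) 2 μ →
      ∫ ω, (o ω - γ (s ω) - (t ω - p (s ω)) * h (s ω)) ^ 2 ∂μ
        = ∫ ω, ε ω ^ 2 ∂μ +
          ∫ ω, ((t ω - p (s ω)) * (h (s ω) - (μ1 (s ω) - μ0 (s ω)))) ^ 2 ∂μ := by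
    intro h hh hh2
    set g : Ω → ℝ := fun ω => h (s ω) - (μ1 (s ω) - μ0 (s ω)) with hg_def
    set X : Ω → ℝ := fun ω => (t ω - p (s ω)) * g ω with hX_def
    have hg2 : MemLp g 2 μ := hh2.sub hΔ2
    have hXmeas : Measurable X := (ht.sub (hp.comp hs)).mul
      ((hh.comp hs).sub ((hμ1.comp hs).sub (hμ0.comp hs)))
    have hX2 : MemLp X 2 μ := by
      refine MemLp.of_le hg2 hXmeas.aestronglyMeasurable ?_
      filter_upwards with ω
      rw [Real.norm_eq_abs, Real.norm_eq_abs, hX_def, abs_mul]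
      exact mul_le_of_le_one_left (abs_nonneg _) (htp ω)
    have hεX_int : Integrable (fun ω => ε ω * X ω) μ := integrable_mul_of_memL2 hε2 hX2
    -- cross term is zero
    have hXm2 : StronglyMeasurable[(MeasurableSpace.comap (fun ω => (s ω, t ω)) inferInstance)] X := by
      refine Measurable.stronglyMeasurable ?_
      exact Measurable.mul (htm2.sub (hp.comp hsm2))
        ((hh.comp hsm2).sub ((hμ1.comp hsm2).sub (hμ0.comp hsm2)))
    have hXr_int : Integrable (fun ω => X ω * r ω) μ := integrable_mul_of_memL2 hX2 hr2
    have hcross : ∫ ω, ε ω * X ω ∂μ = 0 := by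
      have h1 : ∫ ω, ε ω * X ω ∂μ = ∫ ω, X ω * r ω ∂μ := by
        refine integral_congr_ae ?_
        filter_upwards [hεr] with ω hω
        rw [hω]; ring
      have h2 : μ[(fun ω => X ω * r ω) | (MeasurableSpace.comap (fun ω => (s ω, t ω)) inferInstance)] =ᵐ[μ] 0 := by
        refine (condExp_mul_of_stronglyMeasurable_left hXm2 hXr_int
          (hr2.integrable one_le_two)).trans ?_
        filter_upwards [hres] with ω hω
        simp only [Pi.mul_apply, Pi.zero_apply] at hω ⊢
        rw [hω, mul_zero]
      rw [h1, ← integral_condExp hm2, integral_congr_ae h2]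
      simp
    have hexpand : ∀ ω, (o ω - γ (s ω) - (t ω - p (s ω)) * h (s ω)) ^ 2
        = ε ω ^ 2 - 2 * (ε ω * X ω) + X ω ^ 2 := by
      intro ω; simp only [hε_def, hX_def, hg_def]; ring
    calc ∫ ω, (o ω - γ (s ω) - (t ω - p (s ω)) * h (s ω)) ^ 2 ∂μ
        = ∫ ω, (ε ω ^ 2 - 2 * (ε ω * X ω) + X ω ^ 2) ∂μ := by
          exact integral_congr_ae (Filter.Eventually.of_forall fun ω => hexpand ω)
      _ = (∫ ω, ε ω ^ 2 ∂μ - ∫ ω, 2 * (ε ω * X ω) ∂μ) + ∫ ω, X ω ^ 2 ∂μ := by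
          have hA : ∫ ω, (ε ω ^ 2 - 2 * (ε ω * X ω) + X ω ^ 2) ∂μ
              = (∫ ω, (ε ω ^ 2 - 2 * (ε ω * X ω)) ∂μ) + ∫ ω, X ω ^ 2 ∂μ :=
            integral_add (hε2.integrable_sq.sub (hεX_int.const_mul 2)) hX2.integrable_sq
          have hB : ∫ ω, (ε ω ^ 2 - 2 * (ε ω * X ω)) ∂μ
              = (∫ ω, ε ω ^ 2 ∂μ) - ∫ ω, 2 * (ε ω * X ω) ∂μ :=
            integral_sub hε2.integrable_sq (hεX_int.const_mul 2)
          rw [hA, hB]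
      _ = ∫ ω, ε ω ^ 2 ∂μ + ∫ ω, X ω ^ 2 ∂μ := by
          rw [integral_const_mul, hcross]; ring
  -- finish
  have hεint : ∫ ω, (o ω - γ (s ω) - (t ω - p (s ω)) * (μ1 (s ω) - μ0 (s ω))) ^ 2 ∂μ
      = ∫ ω, ε ω ^ 2 ∂μ := by
    simp only [hε_def]
  constructor
  · intro h hh hh2
    rw [key h hh hh2, hεint]
    have : 0 ≤ ∫ ω, ((t ω - p (s ω)) * (h (s ω) - (μ1 (s ω) - μ0 (s ω)))) ^ 2 ∂μ :=
      integral_nonneg fun ω => sq_nonneg _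
    linarith
  · intro h hh hh2 heq
    rw [key h hh hh2, hεint] at heq
    have hX0 : ∫ ω, ((t ω - p (s ω)) * (h (s ω) - (μ1 (s ω) - μ0 (s ω)))) ^ 2 ∂μ = 0 := by
      linarith
    have hXmeas : Measurable (fun ω => (t ω - p (s ω)) * (h (s ω) - (μ1 (s ω) - μ0 (s ω)))) :=
      (ht.sub (hp.comp hs)).mul ((hh.comp hs).sub ((hμ1.comp hs).sub (hμ0.comp hs)))
    have hX2 : MemLp (fun ω => (t ω - p (s ω)) * (h (s ω) - (μ1 (s ω) - μ0 (s ω)))) 2 μ := by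
      refine MemLp.of_le (hh2.sub hΔ2) hXmeas.aestronglyMeasurable ?_
      filter_upwards with ω
      rw [Real.norm_eq_abs, Real.norm_eq_abs, abs_mul]
      exact mul_le_of_le_one_left (abs_nonneg _) (htp ω)
    have hae : (fun ω => ((t ω - p (s ω)) * (h (s ω) - (μ1 (s ω) - μ0 (s ω)))) ^ 2)
        =ᵐ[μ] 0 := by
      rw [← integral_eq_zero_iff_of_nonneg (fun ω => sq_nonneg _) hX2.integrable_sq]
      exact hX0
    filter_upwards [hae] with ω hω
    simp only [Pi.zero_apply] at hω
    have h1 : (t ω - p (s ω)) * (h (s ω) - (μ1 (s ω) - μ0 (s ω))) = 0 :=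
      pow_eq_zero_iff (n := 2) (by norm_num) |>.mp hω
    have h2 : h (s ω) - (μ1 (s ω) - μ0 (s ω)) = 0 :=
      (mul_eq_zero.mp h1).resolve_left (htpne ω)
    linarith
end

section
/- Suppose the shift function is estimated with error: Δ̂ = Δ + e for a measurable perturbation e. Let m̂ be the minimizer of the population bias-corrected objective L_{Δ̂}(h) = κ·E_Q[(r − h(q))²] + (1−κ)·E_{Q'}[(y + Δ̂(q') − h(q'))²] over all square-integrable measurable h. Then m̂(q) = m(q) + (1−κ)f'(q)/(κf(q)+(1−κ)f'(q)) · e(q) almost everywhere on the mixture support; in particular, the pointwise bias of m̂ is bounded by |e(q)|, and m̂ = m wherever e = 0. -/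
open MeasureTheory
open scoped NNReal ENNReal

lemma aux_mul_integrable {Ω : Type*} [MeasurableSpace Ω] {μ : Measure Ω}
    {F G : Ω → ℝ} (hF : MemLp F 2 μ) (hG : MemLp G 2 μ) :
    Integrable (fun ω => F ω * G ω) μ := by
  have h : MemLp (F • G) 1 μ := hG.smul hF
  exact memLp_one_iff_integrable.mp h

lemma aux_pythag {Ω : Type*} [MeasurableSpace Ω] {μ : Measure Ω} [IsProbabilityMeasure μ]
    {X U V : Ω → ℝ} (hX : MemLp X 2 μ) (hU : MemLp U 2 μ) (hV : MemLp V 2 μ)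
    (hcross : ∫ ω, (X ω - U ω) * (U ω - V ω) ∂μ = 0) :
    ∫ ω, (X ω - V ω)^2 ∂μ = ∫ ω, (X ω - U ω)^2 ∂μ + ∫ ω, (U ω - V ω)^2 ∂μ := by
  have h1 : Integrable (fun ω => (X ω - U ω)^2) μ := (hX.sub hU).integrable_sq
  have h2 : Integrable (fun ω => (U ω - V ω)^2) μ := (hU.sub hV).integrable_sq
  have h3 : Integrable (fun ω => (X ω - U ω) * (U ω - V ω)) μ :=
    aux_mul_integrable (hX.sub hU) (hU.sub hV)
  have hpt : ∀ ω, (X ω - V ω)^2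
      = ((X ω - U ω)^2 + (U ω - V ω)^2) + 2*((X ω - U ω)*(U ω - V ω)) := fun ω => by ring
  calc ∫ ω, (X ω - V ω)^2 ∂μ
      = ∫ ω, (((X ω - U ω)^2 + (U ω - V ω)^2) + 2*((X ω - U ω)*(U ω - V ω))) ∂μ :=
        integral_congr_ae (Filter.Eventually.of_forall hpt)
    _ = (∫ ω, ((X ω - U ω)^2 + (U ω - V ω)^2) ∂μ)
        + ∫ ω, 2*((X ω - U ω)*(U ω - V ω)) ∂μ := integral_add (h1.add h2) (h3.const_mul 2)
    _ = ∫ ω, (X ω - U ω)^2 ∂μ + ∫ ω, (U ω - V ω)^2 ∂μ := by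
        rw [integral_add h1 h2, integral_const_mul, hcross]; ring

lemma aux_cross {Ω α : Type*} [mΩ : MeasurableSpace Ω] [mα : MeasurableSpace α]
    {μ : Measure Ω} [IsProbabilityMeasure μ]
    {q : Ω → α} (hq : Measurable q) {r : Ω → ℝ} (hr : MemLp r 2 μ)
    {m : α → ℝ} (hm : Measurable m) (hm2 : MemLp (fun ω => m (q ω)) 2 μ)
    (hmq : μ[r | MeasurableSpace.comap q inferInstance] =ᵐ[μ] fun ω => m (q ω))
    {φ : α → ℝ} (hφ : Measurable φ) (hφ2 : MemLp (fun ω => φ (q ω)) 2 μ) :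
    ∫ ω, (r ω - m (q ω)) * φ (q ω) ∂μ = 0 := by
  have hσ : MeasurableSpace.comap q mα ≤ mΩ := hq.comap_le
  have hqσ : Measurable[MeasurableSpace.comap q mα] q := fun s hs => ⟨s, hs, rfl⟩
  have hφσ : StronglyMeasurable[MeasurableSpace.comap q mα] (fun ω => φ (q ω)) :=
    (hφ.comp hqσ).stronglyMeasurable
  have hG : MemLp (fun ω => r ω - m (q ω)) 2 μ := hr.sub hm2
  have hGint : Integrable (fun ω => r ω - m (q ω)) μ := hG.integrable one_le_two
  have hprod : Integrable ((fun ω => φ (q ω)) * fun ω => r ω - m (q ω)) μ :=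
    aux_mul_integrable hφ2 hG
  have hpull : μ[(fun ω => φ (q ω)) * (fun ω => r ω - m (q ω)) | MeasurableSpace.comap q mα]
      =ᵐ[μ] (fun ω => φ (q ω)) * μ[(fun ω => r ω - m (q ω)) | MeasurableSpace.comap q mα] :=
    condExp_mul_of_stronglyMeasurable_left hφσ hprod hGint
  have hce0 : μ[(fun ω => r ω - m (q ω)) | MeasurableSpace.comap q mα] =ᵐ[μ] 0 := by
    have h1 : μ[r - (fun ω => m (q ω)) | MeasurableSpace.comap q mα]
        =ᵐ[μ] μ[r|MeasurableSpace.comap q mα]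
          - μ[(fun ω => m (q ω))|MeasurableSpace.comap q mα] :=
      condExp_sub (hr.integrable one_le_two) (hm2.integrable one_le_two) _
    have h2 : μ[(fun ω => m (q ω))|MeasurableSpace.comap q mα] = fun ω => m (q ω) :=
      condExp_of_stronglyMeasurable hσ
        (((hm.comp hqσ).stronglyMeasurable :
          StronglyMeasurable[MeasurableSpace.comap q mα] fun ω => m (q ω)))
        (hm2.integrable one_le_two)
    have h3 : (fun ω => r ω - m (q ω)) = r - fun ω => m (q ω) := rfl
    rw [h3]
    filter_upwards [h1, hmq] with ω hω1 hω2
    simp only [hω1, Pi.sub_apply, h2, hω2, Pi.zero_apply, sub_self]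
  have hz : ∫ ω, φ (q ω) * (r ω - m (q ω)) ∂μ = 0 := by
    have hzero : μ[(fun ω => φ (q ω)) * (fun ω => r ω - m (q ω)) | MeasurableSpace.comap q mα]
        =ᵐ[μ] 0 := by
      refine hpull.trans ?_
      filter_upwards [hce0] with ω hω
      simp [hω]
    calc ∫ ω, φ (q ω) * (r ω - m (q ω)) ∂μ
        = ∫ ω, (μ[(fun ω => φ (q ω)) * (fun ω => r ω - m (q ω))
            | MeasurableSpace.comap q mα]) ω ∂μ := (integral_condExp hσ).symm
      _ = 0 := by rw [integral_congr_ae hzero]; simp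
  calc ∫ ω, (r ω - m (q ω)) * φ (q ω) ∂μ = ∫ ω, φ (q ω) * (r ω - m (q ω)) ∂μ := by
        simp_rw [mul_comm]
    _ = 0 := hz

/-- all the pointwise algebra in one place -/
lemma aux_alg (κ fx f'x mx ex hx : ℝ) (hκ0 : 0 < κ) (hκ1 : κ < 1)
    (hfnn : 0 ≤ fx) (hf'nn : 0 ≤ f'x) :
    0 ≤ (1 - κ) * f'x / (κ * fx + (1 - κ) * f'x)
    ∧ (1 - κ) * f'x / (κ * fx + (1 - κ) * f'x) ≤ 1
    ∧ (κ * fx * (mx - hx)^2 + (1 - κ) * f'x * (mx + ex - hx)^2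
        = (κ * fx + (1 - κ) * f'x)
            * (hx - (mx + ((1 - κ) * f'x / (κ * fx + (1 - κ) * f'x)) * ex))^2
          + κ * fx * (((1 - κ) * f'x / (κ * fx + (1 - κ) * f'x)) * ex^2))
    ∧ κ * (fx * ((1 - κ) * f'x / (κ * fx + (1 - κ) * f'x))) ≤ (1 - κ) * f'x := by
  have hκ1' : (0:ℝ) < 1 - κ := by linarith
  set w : ℝ := (1 - κ) * f'x / (κ * fx + (1 - κ) * f'x) with hw_def
  have hd_nn : 0 ≤ κ * fx + (1 - κ) * f'x := by positivity
  have hdeg : κ * fx + (1 - κ) * f'x = 0 → fx = 0 ∧ f'x = 0 := by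
    intro h; constructor <;> nlinarith
  refine ⟨div_nonneg (by positivity) hd_nn, ?_, ?_, ?_⟩
  · rcases eq_or_lt_of_le hd_nn with h | h
    · rw [hw_def, ← h, div_zero]; norm_num
    · rw [hw_def]; apply div_le_one_of_le₀ (by nlinarith) hd_nn
  · rcases eq_or_lt_of_le hd_nn with h | h
    · obtain ⟨h1, h2⟩ := hdeg h.symm
      simp [hw_def, h1, h2]
    · rw [hw_def]; field_simp; ring
  · rcases eq_or_lt_of_le hd_nn with h | h
    · obtain ⟨h1, h2⟩ := hdeg h.symm
      simp [h1, h2]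
    · have h2 : κ * (fx * w) = κ * fx * ((1 - κ) * f'x) / (κ * fx + (1 - κ) * f'x) := by
        rw [hw_def]; ring
      rw [h2, div_le_iff₀ h]
      nlinarith [sq_nonneg ((1 - κ) * f'x)]

/-- If the shift function is estimated with error `Δ̂ = Δ + e` and `m̂`
minimizes the population bias-corrected objective
`L(h) = κ·E_Q[(r − h(q))²] + (1−κ)·E_{Q'}[(y + Δ̂(q') − h(q'))²]`
over square-integrable measurable `h`, then
`m̂(q) = m(q) + (1−κ)f'(q)/(κf(q)+(1−κ)f'(q))·e(q)` almost everywhere on the mixture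
support; in particular the pointwise bias of `m̂` is bounded by `|e(q)|`, and `m̂ = m`
wherever `e = 0`. -/
theorem perturbed_shift_minimizer_bias
    {α : Type*} [MeasurableSpace α] (μ0 : Measure α) [SigmaFinite μ0]
    (f f' : α → ℝ) (hf : Measurable f) (hf' : Measurable f')
    (hfnn : ∀ x, 0 ≤ f x) (hf'nn : ∀ x, 0 ≤ f' x)
    (QQ QQ' : Measure α)
    (hQ : QQ = μ0.withDensity fun x => ENNReal.ofReal (f x))
    (hQ' : QQ' = μ0.withDensity fun x => ENNReal.ofReal (f' x))
    [IsProbabilityMeasure QQ] [IsProbabilityMeasure QQ']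
    (κ : ℝ) (hκ0 : 0 < κ) (hκ1 : κ < 1)
    -- the mixture distribution
    (Mix : Measure α)
    (hMix : Mix = ENNReal.ofReal κ • QQ + ENNReal.ofReal (1 - κ) • QQ')
    -- positivity on the mixture support
    (hpos : ∀ᵐ x ∂Mix, 0 < κ * f x + (1 - κ) * f' x)
    -- the two data sources
    {Ω₁ Ω₂ : Type*} [MeasurableSpace Ω₁] [MeasurableSpace Ω₂]
    (μ₁ : Measure Ω₁) [IsProbabilityMeasure μ₁]
    (μ₂ : Measure Ω₂) [IsProbabilityMeasure μ₂]
    (q : Ω₁ → α) (hq : Measurable q) (hqlaw : μ₁.map q = QQ)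
    (q' : Ω₂ → α) (hq' : Measurable q') (hq'law : μ₂.map q' = QQ')
    (r : Ω₁ → ℝ) (hr : MemLp r 2 μ₁) (y : Ω₂ → ℝ) (hy : MemLp y 2 μ₂)
    (m η : α → ℝ) (hm : Measurable m) (hη : Measurable η)
    (hmq : μ₁[r | MeasurableSpace.comap q inferInstance] =ᵐ[μ₁] fun ω => m (q ω))
    (hηq : μ₂[y | MeasurableSpace.comap q' inferInstance] =ᵐ[μ₂] fun ω => η (q' ω))
    -- perturbed shift Δ̂ = Δ + e, Δ = m − η
    (e : α → ℝ) (he : Measurable e) (he2 : MemLp (fun ω => e (q' ω)) 2 μ₂)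
    (Δhat : α → ℝ) (hΔhat : ∀ x, Δhat x = (m x - η x) + e x)
    -- the perturbed population objective
    (L : (α → ℝ) → ℝ)
    (hL : ∀ h : α → ℝ,
      L h = κ * ∫ ω, (r ω - h (q ω)) ^ 2 ∂μ₁
        + (1 - κ) * ∫ ω, (y ω + Δhat (q' ω) - h (q' ω)) ^ 2 ∂μ₂)
    (hm2 : MemLp (fun ω => m (q ω)) 2 μ₁) (hm2' : MemLp (fun ω => m (q' ω)) 2 μ₂)
    (hη2 : MemLp (fun ω => η (q' ω)) 2 μ₂)
    -- m̂ is a square-integrable measurable minimizer of L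
    (mhat : α → ℝ) (hmhat : Measurable mhat)
    (hmhat2 : MemLp (fun ω => mhat (q ω)) 2 μ₁)
    (hmhat2' : MemLp (fun ω => mhat (q' ω)) 2 μ₂)
    (hmin : ∀ h : α → ℝ, Measurable h →
      MemLp (fun ω => h (q ω)) 2 μ₁ → MemLp (fun ω => h (q' ω)) 2 μ₂ →
      L mhat ≤ L h) :
    (∀ᵐ x ∂Mix,
        mhat x = m x + ((1 - κ) * f' x / (κ * f x + (1 - κ) * f' x)) * e x)
      ∧ (∀ᵐ x ∂Mix, |mhat x - m x| ≤ |e x|)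
      ∧ (∀ᵐ x ∂Mix, e x = 0 → mhat x = m x) := by
  have hκ1' : (0:ℝ) < 1 - κ := by linarith
  -- the weight and the candidate minimizer
  set w : α → ℝ := fun x => (1 - κ) * f' x / (κ * f x + (1 - κ) * f' x) with hw_def
  set g : α → ℝ := fun x => m x + w x * e x with hg_def
  have halg := fun (x : α) (mx ex hx : ℝ) =>
    aux_alg κ (f x) (f' x) mx ex hx hκ0 hκ1 (hfnn x) (hf'nn x)
  have hw_nonneg : ∀ x, 0 ≤ w x := fun x => (halg x 0 0 0).1
  have hw_le_one : ∀ x, w x ≤ 1 := fun x => (halg x 0 0 0).2.1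
  have hbd : ∀ x, κ * (f x * w x) ≤ (1 - κ) * f' x := fun x => (halg x 0 0 0).2.2.2
  have hkey : ∀ (h : α → ℝ) (x : α),
      κ * f x * (m x - h x)^2 + (1 - κ) * f' x * (m x + e x - h x)^2
        = (κ * f x + (1 - κ) * f' x) * (h x - g x)^2 + κ * f x * (w x * e x^2) :=
    fun h x => (halg x (m x) (e x) (h x)).2.2.1
  have hw_meas : Measurable w :=
    (hf'.const_mul (1 - κ)).div ((hf.const_mul κ).add (hf'.const_mul (1 - κ)))
  have hgmeas : Measurable g := hm.add (hw_meas.mul he)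
  -- transfer lemmas for Q
  have memQ : ∀ (F : α → ℝ), Measurable F →
      (MemLp F 2 QQ ↔ MemLp (fun ω => F (q ω)) 2 μ₁) := by
    intro F hF
    rw [← hqlaw]
    exact memLp_map_measure_iff hF.aestronglyMeasurable hq.aemeasurable
  have memQ' : ∀ (F : α → ℝ), Measurable F →
      (MemLp F 2 QQ' ↔ MemLp (fun ω => F (q' ω)) 2 μ₂) := by
    intro F hF
    rw [← hq'law]
    exact memLp_map_measure_iff hF.aestronglyMeasurable hq'.aemeasurable
  have intQ : ∀ (F : α → ℝ), Measurable F →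
      (Integrable F QQ ↔ Integrable (fun x => f x * F x) μ0) := by
    intro F hF
    rw [hQ, integrable_withDensity_iff hf.ennreal_ofReal
      (by filter_upwards with x using ENNReal.ofReal_lt_top)]
    have hfun : (fun x => F x * (ENNReal.ofReal (f x)).toReal) = fun x => f x * F x :=
      funext fun x => by rw [ENNReal.toReal_ofReal (hfnn x)]; ring
    rw [hfun]
  have intQ' : ∀ (F : α → ℝ), Measurable F →
      (Integrable F QQ' ↔ Integrable (fun x => f' x * F x) μ0) := by
    intro F hF
    rw [hQ', integrable_withDensity_iff hf'.ennreal_ofReal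
      (by filter_upwards with x using ENNReal.ofReal_lt_top)]
    have hfun : (fun x => F x * (ENNReal.ofReal (f' x)).toReal) = fun x => f' x * F x :=
      funext fun x => by rw [ENNReal.toReal_ofReal (hf'nn x)]; ring
    rw [hfun]
  have intgQ : ∀ (F : α → ℝ), Measurable F →
      ∫ ω, F (q ω) ∂μ₁ = ∫ x, f x * F x ∂μ0 := by
    intro F hF
    have h1 : ∫ ω, F (q ω) ∂μ₁ = ∫ x, F x ∂QQ := by
      rw [← hqlaw, integral_map hq.aemeasurable hF.aestronglyMeasurable]
    rw [h1, hQ]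
    calc ∫ x, F x ∂(μ0.withDensity fun x => ENNReal.ofReal (f x))
        = ∫ x, Real.toNNReal (f x) • F x ∂μ0 :=
          integral_withDensity_eq_integral_smul (measurable_real_toNNReal.comp hf) F
      _ = ∫ x, f x * F x ∂μ0 := integral_congr_ae (Filter.Eventually.of_forall fun x => by
          simp [NNReal.smul_def, Real.coe_toNNReal _ (hfnn x)])
  have intgQ' : ∀ (F : α → ℝ), Measurable F →
      ∫ ω, F (q' ω) ∂μ₂ = ∫ x, f' x * F x ∂μ0 := by
    intro F hF
    have h1 : ∫ ω, F (q' ω) ∂μ₂ = ∫ x, F x ∂QQ' := by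
      rw [← hq'law, integral_map hq'.aemeasurable hF.aestronglyMeasurable]
    rw [h1, hQ']
    calc ∫ x, F x ∂(μ0.withDensity fun x => ENNReal.ofReal (f' x))
        = ∫ x, Real.toNNReal (f' x) • F x ∂μ0 :=
          integral_withDensity_eq_integral_smul (measurable_real_toNNReal.comp hf') F
      _ = ∫ x, f' x * F x ∂μ0 := integral_congr_ae (Filter.Eventually.of_forall fun x => by
          simp [NNReal.smul_def, Real.coe_toNNReal _ (hf'nn x)])
  -- basic MemLp facts over the laws
  have hmQ : MemLp m 2 QQ := (memQ m hm).mpr hm2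
  have hmQ' : MemLp m 2 QQ' := (memQ' m hm).mpr hm2'
  have heQ' : MemLp e 2 QQ' := (memQ' e he).mpr he2
  have hmhatQ : MemLp mhat 2 QQ := (memQ mhat hmhat).mpr hmhat2
  have hmhatQ' : MemLp mhat 2 QQ' := (memQ' mhat hmhat).mpr hmhat2'
  have Int_f'e2 : Integrable (fun x => f' x * e x ^ 2) μ0 :=
    (intQ' (fun x => e x ^ 2) (he.pow_const 2)).mp heQ'.integrable_sq
  -- ψ = w·e is square integrable wrt both Q and Q'
  have hψmeas : Measurable (fun x => w x * e x) := hw_meas.mul he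
  have hψQ : MemLp (fun x => w x * e x) 2 QQ := by
    refine (memLp_two_iff_integrable_sq hψmeas.aestronglyMeasurable).mpr ?_
    refine (intQ (fun x => (w x * e x) ^ 2) (hψmeas.pow_const 2)).mpr ?_
    refine Integrable.mono' (Int_f'e2.const_mul ((1 - κ)/κ))
      ((hf.mul (hψmeas.pow_const 2)).aestronglyMeasurable) ?_
    filter_upwards with x
    have t1 : κ * (f x * w x) * e x ^ 2 ≤ (1 - κ) * f' x * e x ^ 2 :=
      mul_le_mul_of_nonneg_right (hbd x) (sq_nonneg _)
    have t2 : 0 ≤ κ * (f x * w x) * (1 - w x) * e x ^ 2 :=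
      mul_nonneg (mul_nonneg (mul_nonneg hκ0.le
        (mul_nonneg (hfnn x) (hw_nonneg x))) (sub_nonneg.mpr (hw_le_one x))) (sq_nonneg _)
    have hR : (1 - κ)/κ * (f' x * e x ^ 2) = ((1 - κ) * (f' x * e x ^ 2))/κ := by ring
    rw [Real.norm_eq_abs, abs_of_nonneg (mul_nonneg (hfnn x) (sq_nonneg _)), hR,
      le_div_iff₀ hκ0]
    nlinarith [t1, t2]
  have hψQ' : MemLp (fun x => w x * e x) 2 QQ' := by
    refine (memLp_two_iff_integrable_sq hψmeas.aestronglyMeasurable).mpr ?_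
    refine (intQ' (fun x => (w x * e x) ^ 2) (hψmeas.pow_const 2)).mpr ?_
    refine Integrable.mono' Int_f'e2
      ((hf'.mul (hψmeas.pow_const 2)).aestronglyMeasurable) ?_
    filter_upwards with x
    have t2 : 0 ≤ f' x * (1 - w x) * (1 + w x) * e x ^ 2 :=
      mul_nonneg (mul_nonneg (mul_nonneg (hf'nn x) (sub_nonneg.mpr (hw_le_one x)))
        (by linarith [hw_nonneg x])) (sq_nonneg _)
    rw [Real.norm_eq_abs, abs_of_nonneg (mul_nonneg (hf'nn x) (sq_nonneg _))]
    nlinarith [t2]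
  have hgQ : MemLp g 2 QQ := hmQ.add hψQ
  have hgQ' : MemLp g 2 QQ' := hmQ'.add hψQ'
  have hg2 : MemLp (fun ω => g (q ω)) 2 μ₁ := (memQ g hgmeas).mp hgQ
  have hg2' : MemLp (fun ω => g (q' ω)) 2 μ₂ := (memQ' g hgmeas).mp hgQ'
  -- the decomposition of the objective
  have hdecomp : ∀ h : α → ℝ, Measurable h → MemLp (fun ω => h (q ω)) 2 μ₁ →
      MemLp (fun ω => h (q' ω)) 2 μ₂ →
      L h = (κ * ∫ ω, (r ω - m (q ω))^2 ∂μ₁)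
        + ((1 - κ) * ∫ ω, (y ω - η (q' ω))^2 ∂μ₂)
        + ∫ x, (κ * f x * (m x - h x)^2 + (1 - κ) * f' x * (m x + e x - h x)^2) ∂μ0 := by
    intro h hh hh1 hh2
    have hhQ : MemLp h 2 QQ := (memQ h hh).mpr hh1
    have hhQ' : MemLp h 2 QQ' := (memQ' h hh).mpr hh2
    -- source 1
    have c1 : ∫ ω, (r ω - m (q ω)) * ((fun x => m x - h x) (q ω)) ∂μ₁ = 0 :=
      aux_cross (φ := fun x => m x - h x) hq hr hm hm2 hmq (hm.sub hh) (hm2.sub hh1)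
    have p1 : ∫ ω, (r ω - h (q ω))^2 ∂μ₁
        = ∫ ω, (r ω - m (q ω))^2 ∂μ₁ + ∫ ω, (m (q ω) - h (q ω))^2 ∂μ₁ :=
      aux_pythag hr hm2 hh1 c1
    have trans1 : ∫ ω, (m (q ω) - h (q ω))^2 ∂μ₁ = ∫ x, f x * (m x - h x)^2 ∂μ0 :=
      intgQ (fun x => (m x - h x)^2) ((hm.sub hh).pow_const 2)
    -- source 2
    have hYeq : ∀ ω, y ω + Δhat (q' ω) - (m (q' ω) + e (q' ω)) = y ω - η (q' ω) :=
      fun ω => by rw [hΔhat]; ring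
    have hU2 : MemLp (fun ω => m (q' ω) + e (q' ω)) 2 μ₂ := hm2'.add he2
    have hX2 : MemLp (fun ω => y ω + Δhat (q' ω)) 2 μ₂ := by
      have hfe : (fun ω => y ω + Δhat (q' ω))
          = fun ω => (y ω - η (q' ω)) + (m (q' ω) + e (q' ω)) :=
        funext fun ω => by rw [hΔhat]; ring
      rw [hfe]; exact (hy.sub hη2).add hU2
    have c2' : ∫ ω, (y ω - η (q' ω)) * ((fun x => m x + e x - h x) (q' ω)) ∂μ₂ = 0 :=
      aux_cross (φ := fun x => m x + e x - h x) hq' hy hη hη2 hηq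
        ((hm.add he).sub hh) ((hm2'.add he2).sub hh2)
    have c2 : ∫ ω, ((y ω + Δhat (q' ω)) - (m (q' ω) + e (q' ω)))
        * ((m (q' ω) + e (q' ω)) - h (q' ω)) ∂μ₂ = 0 := by
      rw [← c2']
      exact integral_congr_ae (Filter.Eventually.of_forall fun ω => by
        simp only [hYeq])
    have p2 : ∫ ω, ((y ω + Δhat (q' ω)) - h (q' ω))^2 ∂μ₂
        = ∫ ω, ((y ω + Δhat (q' ω)) - (m (q' ω) + e (q' ω)))^2 ∂μ₂
          + ∫ ω, ((m (q' ω) + e (q' ω)) - h (q' ω))^2 ∂μ₂ :=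
      aux_pythag hX2 hU2 hh2 c2
    have p2' : ∫ ω, ((y ω + Δhat (q' ω)) - (m (q' ω) + e (q' ω)))^2 ∂μ₂
        = ∫ ω, (y ω - η (q' ω))^2 ∂μ₂ :=
      integral_congr_ae (Filter.Eventually.of_forall fun ω => by simp only [hYeq])
    have trans2 : ∫ ω, ((m (q' ω) + e (q' ω)) - h (q' ω))^2 ∂μ₂
        = ∫ x, f' x * (m x + e x - h x)^2 ∂μ0 :=
      intgQ' (fun x => (m x + e x - h x)^2) (((hm.add he).sub hh).pow_const 2)
    -- integrability over μ0
    have i1 : Integrable (fun x => f x * (m x - h x)^2) μ0 :=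
      (intQ (fun x => (m x - h x)^2) ((hm.sub hh).pow_const 2)).mp (hmQ.sub hhQ).integrable_sq
    have i2 : Integrable (fun x => f' x * (m x + e x - h x)^2) μ0 :=
      (intQ' (fun x => (m x + e x - h x)^2) (((hm.add he).sub hh).pow_const 2)).mp
        ((hmQ'.add heQ').sub hhQ').integrable_sq
    rw [hL h, p1, trans1, p2, p2', trans2]
    have hsum : ∫ x, (κ * f x * (m x - h x)^2 + (1 - κ) * f' x * (m x + e x - h x)^2) ∂μ0
        = κ * (∫ x, f x * (m x - h x)^2 ∂μ0)
          + (1 - κ) * ∫ x, f' x * (m x + e x - h x)^2 ∂μ0 := by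
      rw [← integral_const_mul, ← integral_const_mul,
        ← integral_add (i1.const_mul κ) (i2.const_mul (1 - κ))]
      exact integral_congr_ae (Filter.Eventually.of_forall fun x => by ring)
    rw [hsum]; ring
  -- integrability of the two pieces in the pointwise decomposition
  have hPint : Integrable (fun x => (κ * f x + (1 - κ) * f' x) * (mhat x - g x)^2) μ0 := by
    have e1 : Integrable (fun x => f x * (mhat x - g x)^2) μ0 :=
      (intQ (fun x => (mhat x - g x)^2) ((hmhat.sub hgmeas).pow_const 2)).mp
        (hmhatQ.sub hgQ).integrable_sq
    have e2 : Integrable (fun x => f' x * (mhat x - g x)^2) μ0 :=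
      (intQ' (fun x => (mhat x - g x)^2) ((hmhat.sub hgmeas).pow_const 2)).mp
        (hmhatQ'.sub hgQ').integrable_sq
    have hfe : (fun x => (κ * f x + (1 - κ) * f' x) * (mhat x - g x)^2)
        = fun x => κ * (f x * (mhat x - g x)^2) + (1 - κ) * (f' x * (mhat x - g x)^2) :=
      funext fun x => by ring
    rw [hfe]
    exact (e1.const_mul κ).add (e2.const_mul (1 - κ))
  have hcint : Integrable (fun x => κ * f x * (w x * e x ^ 2)) μ0 := by
    refine Integrable.mono' (Int_f'e2.const_mul (1 - κ))
      (((hf.const_mul κ).mul (hw_meas.mul (he.pow_const 2))).aestronglyMeasurable) ?_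
    filter_upwards with x
    have t1 : κ * (f x * w x) * e x ^ 2 ≤ (1 - κ) * f' x * e x ^ 2 :=
      mul_le_mul_of_nonneg_right (hbd x) (sq_nonneg _)
    rw [Real.norm_eq_abs, abs_of_nonneg (mul_nonneg (mul_nonneg hκ0.le (hfnn x))
      (mul_nonneg (hw_nonneg x) (sq_nonneg _)))]
    nlinarith [t1]
  -- use minimality at g
  have dmhat := hdecomp mhat hmhat hmhat2 hmhat2'
  have dg := hdecomp g hgmeas hg2 hg2'
  have hle := hmin g hgmeas hg2 hg2'
  have hJle : ∫ x, (κ * f x * (m x - mhat x)^2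
        + (1 - κ) * f' x * (m x + e x - mhat x)^2) ∂μ0
      ≤ ∫ x, (κ * f x * (m x - g x)^2 + (1 - κ) * f' x * (m x + e x - g x)^2) ∂μ0 := by
    rw [dmhat, dg] at hle; linarith
  have hsplit : ∫ x, (κ * f x * (m x - mhat x)^2
        + (1 - κ) * f' x * (m x + e x - mhat x)^2) ∂μ0
      = (∫ x, (κ * f x + (1 - κ) * f' x) * (mhat x - g x)^2 ∂μ0)
        + ∫ x, κ * f x * (w x * e x ^ 2) ∂μ0 := by
    rw [← integral_add hPint hcint]
    exact integral_congr_ae (Filter.Eventually.of_forall fun x => hkey mhat x)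
  have hgval : ∫ x, (κ * f x * (m x - g x)^2 + (1 - κ) * f' x * (m x + e x - g x)^2) ∂μ0
      = ∫ x, κ * f x * (w x * e x ^ 2) ∂μ0 := by
    refine integral_congr_ae (Filter.Eventually.of_forall fun x => ?_)
    have := hkey g x
    simpa using this
  have hP0 : ∫ x, (κ * f x + (1 - κ) * f' x) * (mhat x - g x)^2 ∂μ0 = 0 := by
    have hge : 0 ≤ ∫ x, (κ * f x + (1 - κ) * f' x) * (mhat x - g x)^2 ∂μ0 :=
      integral_nonneg fun x => mul_nonneg
        (by nlinarith [hfnn x, hf'nn x]) (sq_nonneg _)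
    rw [hsplit, hgval] at hJle
    linarith
  have hzero : (fun x => (κ * f x + (1 - κ) * f' x) * (mhat x - g x)^2) =ᵐ[μ0] 0 := by
    refine (integral_eq_zero_iff_of_nonneg ?_ hPint).mp hP0
    intro x
    exact mul_nonneg (by nlinarith [hfnn x, hf'nn x]) (sq_nonneg _)
  -- transfer to the mixture
  have hACQ : QQ ≪ μ0 := hQ ▸ withDensity_absolutelyContinuous μ0 _
  have hACQ' : QQ' ≪ μ0 := hQ' ▸ withDensity_absolutelyContinuous μ0 _
  have hMixAC : Mix ≪ μ0 := by
    rw [hMix]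
    intro s hs
    simp [Measure.add_apply, Measure.smul_apply, hACQ hs, hACQ' hs]
  have hMixzero : ∀ᵐ x ∂Mix, (κ * f x + (1 - κ) * f' x) * (mhat x - g x)^2 = 0 := by
    have h0 : ∀ᵐ x ∂μ0, (κ * f x + (1 - κ) * f' x) * (mhat x - g x)^2 = 0 := hzero
    exact h0.filter_mono hMixAC.ae_le
  have hfinal : ∀ᵐ x ∂Mix, mhat x = g x := by
    filter_upwards [hMixzero, hpos] with x h1 h2
    have h3 : (mhat x - g x)^2 = 0 := by
      rcases mul_eq_zero.mp h1 with h | h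
      · exact absurd h h2.ne'
      · exact h
    have h4 : mhat x - g x = 0 := by
      exact pow_eq_zero_iff (by norm_num) |>.mp h3
    linarith
  refine ⟨?_, ?_, ?_⟩
  · filter_upwards [hfinal] with x hx
    rw [hx]
  · filter_upwards [hfinal] with x hx
    rw [hx]
    simp only [hg_def]
    rw [add_sub_cancel_left, abs_mul]
    calc |w x| * |e x| ≤ 1 * |e x| := by
          apply mul_le_mul_of_nonneg_right _ (abs_nonneg _)
          rw [abs_of_nonneg (hw_nonneg x)]
          exact hw_le_one x
      _ = |e x| := one_mul _
  · filter_upwards [hfinal] with x hx hex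
    rw [hx]
    simp only [hg_def, hex, mul_zero, add_zero]
end
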